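/- arXiv:quant-ph/9609025 — 6 statements merged into one kernel-verified Lean document; each statement's English description precedes it below -/
import Mathlib

section
/- For every ν ∈ ℝ, there is no admissible quantization of P of type (i)′ with parameter ν; that is, there is no ℝ-linear map Q from P to linear operators D → D satisfying Q({f, g}) = i(Q(f)Q(g) − Q(g)Q(f)) for all f, g ∈ P, Q(1) = I, Q(f) symmetric for every f ∈ P, Q(ℓ)ψ = −iψ′ + νψ, Q(sin θ) = multiplication by sin θ, and Q(cos θ) = multiplication by cos θ. -/
noncomputable section

open Complex

/-- Partial derivative in the first (angle) variable. -/
def pdTheta (f : ℝ × ℝ → ℝ) : ℝ × ℝ → ℝ := fun p => deriv (fun t => f (t, p.2)) p.1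

/-- Partial derivative in the second (momentum) variable. -/
def pdEll (f : ℝ × ℝ → ℝ) : ℝ × ℝ → ℝ := fun p => deriv (fun l => f (p.1, l)) p.2

/-- Poisson bracket `{f,g} = f_ℓ g_θ − f_θ g_ℓ`. -/
def pb (f g : ℝ × ℝ → ℝ) : ℝ × ℝ → ℝ :=
  fun p => pdEll f p * pdTheta g p - pdTheta f p * pdEll g p

/-- Spanning set for the polynomial algebra `P`. -/
def PGens : Set (ℝ × ℝ → ℝ) :=
  {h | ∃ r m : ℕ, h = (fun p : ℝ × ℝ => p.2 ^ r * Real.sin (m * p.1)) ∨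
       h = (fun p : ℝ × ℝ => p.2 ^ r * Real.cos (m * p.1))}

/-- The polynomial algebra `P`. -/
def P : Submodule ℝ (ℝ × ℝ → ℝ) := Submodule.span ℝ PGens

def fone : ℝ × ℝ → ℝ := fun _ => 1
def fell : ℝ × ℝ → ℝ := fun p => p.2
def fsin : ℝ × ℝ → ℝ := fun p => Real.sin p.1
def fcos : ℝ × ℝ → ℝ := fun p => Real.cos p.1

lemma fone_mem_P : fone ∈ P :=
  Submodule.subset_span ⟨0, 0, Or.inr (by funext p; simp [fone])⟩

lemma fell_mem_P : fell ∈ P :=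
  Submodule.subset_span ⟨1, 0, Or.inr (by funext p; simp [fell])⟩

lemma fsin_mem_P : fsin ∈ P :=
  Submodule.subset_span ⟨0, 1, Or.inl (by funext p; simp [fsin])⟩

lemma fcos_mem_P : fcos ∈ P :=
  Submodule.subset_span ⟨0, 1, Or.inr (by funext p; simp [fcos])⟩

/-- The domain `D = C^∞(S¹,ℂ)`: smooth `2π`-periodic functions. -/
def Dom : Submodule ℂ (ℝ → ℂ) where
  carrier := {ψ | ContDiff ℝ (⊤ : ℕ∞) ψ ∧ ∀ t, ψ (t + 2 * Real.pi) = ψ t}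
  add_mem' := by
    intro a b ha hb
    exact ⟨ha.1.add hb.1, fun t => by simp [Pi.add_apply, ha.2 t, hb.2 t]⟩
  zero_mem' := ⟨contDiff_const, fun t => rfl⟩
  smul_mem' := by
    intro c a ha
    exact ⟨ha.1.const_smul c, fun t => by simp [Pi.smul_apply, ha.2 t]⟩

/-- The `L²` inner product on `D`. -/
def ip (φ ψ : ℝ → ℂ) : ℂ := ∫ t in (0:ℝ)..(2 * Real.pi), (starRingEnd ℂ) (φ t) * ψ t

/-- Symmetric operator on `D`. -/
def SymmetricOp (A : Dom →ₗ[ℂ] Dom) : Prop :=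
  ∀ φ ψ : Dom, ip (A φ : ℝ → ℂ) (ψ : ℝ → ℂ) = ip (φ : ℝ → ℂ) (A ψ : ℝ → ℂ)

/-- An admissible quantization of type (i)′ with parameter ν of a Lie subalgebra
`O ⊆ P` containing the basic set. -/
structure IsQuant (O : Submodule ℝ (ℝ × ℝ → ℝ)) (ν : ℝ)
    (Q : O →ₗ[ℝ] (Dom →ₗ[ℂ] Dom)) : Prop where
  map_bracket : ∀ (f g : O) (h : pb f g ∈ O),
    Q ⟨pb f g, h⟩ = Complex.I • (Q f ∘ₗ Q g - Q g ∘ₗ Q f)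
  map_one : ∀ h : fone ∈ O, Q ⟨fone, h⟩ = LinearMap.id
  symm : ∀ f : O, SymmetricOp (Q f)
  map_ell : ∀ (h : fell ∈ O) (ψ : Dom) (t : ℝ),
    (Q ⟨fell, h⟩ ψ : ℝ → ℂ) t = -Complex.I * deriv (ψ : ℝ → ℂ) t + (ν : ℂ) * (ψ : ℝ → ℂ) t
  map_sin : ∀ (h : fsin ∈ O) (ψ : Dom) (t : ℝ),
    (Q ⟨fsin, h⟩ ψ : ℝ → ℂ) t = (Real.sin t : ℂ) * (ψ : ℝ → ℂ) t
  map_cos : ∀ (h : fcos ∈ O) (ψ : Dom) (t : ℝ),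
    (Q ⟨fcos, h⟩ ψ : ℝ → ℂ) t = (Real.cos t : ℂ) * (ψ : ℝ → ℂ) t

end
noncomputable section
namespace NG
open Complex

def en (n : ℤ) : ℝ → ℂ := fun t => Complex.exp ((n : ℂ) * t * Complex.I)

lemma en_zero (n : ℤ) : en n 0 = 1 := by simp [en]

lemma en_add (m n : ℤ) (t : ℝ) : en (m + n) t = en m t * en n t := by
  rw [en, en, en, ← Complex.exp_add]
  congr 1
  push_cast
  ring

lemma en_contDiff (n : ℤ) : ContDiff ℝ (⊤ : ℕ∞) (en n) := by
  have h : en n = fun t : ℝ => Complex.exp (((n:ℂ) * Complex.I) * (Complex.ofRealCLM t)) := by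
    funext t
    rw [en]
    congr 1
    simp
    ring
  rw [h]
  exact (contDiff_const.mul Complex.ofRealCLM.contDiff).cexp

lemma en_periodic (n : ℤ) (t : ℝ) : en n (t + 2 * Real.pi) = en n t := by
  have h : ((n:ℂ)) * (↑(t + 2*Real.pi)) * I = (n:ℂ) * t * I + n * (2 * (Real.pi:ℂ) * I) := by
    push_cast; ring
  rw [en, h, Complex.exp_add, Complex.exp_int_mul_two_pi_mul_I, mul_one]
  rfl

lemma en_hasDerivAt (n : ℤ) (t : ℝ) : HasDerivAt (en n) ((n : ℂ) * Complex.I * en n t) t := by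
  have h1 : HasDerivAt (fun s : ℝ => ((n:ℂ)) * s * Complex.I) ((n:ℂ) * Complex.I) t := by
    simpa using ((Complex.ofRealCLM.hasDerivAt (x := t)).const_mul ((n:ℂ))).mul_const Complex.I
  have h2 := h1.cexp
  rw [show Complex.exp ((n:ℂ) * t * Complex.I) * ((n:ℂ) * Complex.I) = (n:ℂ) * Complex.I * en n t from by rw [en]; ring] at h2
  exact h2

lemma en_deriv (n : ℤ) (t : ℝ) : deriv (en n) t = (n : ℂ) * Complex.I * en n t :=
  (en_hasDerivAt n t).deriv

def eD (n : ℤ) : Dom := ⟨en n, en_contDiff n, fun t => en_periodic n t⟩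

@[simp] lemma eD_coe (n : ℤ) : ((eD n : Dom) : ℝ → ℂ) = en n := rfl

lemma en_ne (k : ℤ) (t : ℝ) : en k t ≠ 0 := Complex.exp_ne_zero _

lemma eigen (ψ : Dom) (k : ℤ)
    (h : ∀ t, deriv (ψ : ℝ → ℂ) t = (k : ℂ) * Complex.I * (ψ : ℝ → ℂ) t) :
    ψ = ((ψ : ℝ → ℂ) 0) • eD k := by
  have hdiff : Differentiable ℝ (ψ : ℝ → ℂ) := ψ.2.1.differentiable (by simp)
  have hg : ∀ t, HasDerivAt (fun s => (ψ : ℝ → ℂ) s * en (-k) s) 0 t := by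
    intro t
    have h1 := ((hdiff t).hasDerivAt).mul (en_hasDerivAt (-k) t)
    rw [h t] at h1
    refine HasDerivAt.congr_deriv h1 ?_
    push_cast
    ring
  have hconst : ∀ t, (ψ : ℝ → ℂ) t * en (-k) t = (ψ : ℝ → ℂ) 0 * en (-k) 0 := fun t =>
    is_const_of_deriv_eq_zero (fun s => (hg s).differentiableAt) (fun s => (hg s).deriv) t 0
  apply Subtype.ext
  funext t
  show (ψ : ℝ → ℂ) t = (((ψ : ℝ → ℂ) 0) • (eD k : ℝ → ℂ)) t
  rw [Pi.smul_apply, smul_eq_mul, eD_coe]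
  have h2 := hconst t
  rw [en_zero, mul_one] at h2
  have h3 : en (-k) t * en k t = 1 := by rw [← en_add]; simp [en]
  calc (ψ : ℝ → ℂ) t = (ψ:ℝ→ℂ) t * (en (-k) t * en k t) := by rw [h3, mul_one]
    _ = ((ψ:ℝ→ℂ) 0) * en k t := by rw [← mul_assoc, h2]

lemma en_pi_half (k : ℤ) : en (k + 2) (Real.pi / 2) = - en k (Real.pi / 2) := by
  rw [en_add]
  have h : en 2 (Real.pi/2) = -1 := by
    rw [en, show ((2:ℤ):ℂ) * (↑(Real.pi/2)) * I = (Real.pi:ℂ) * I from by push_cast; ring,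
      Complex.exp_pi_mul_I]
  rw [h]
  ring

lemma pair_eq {k : ℤ} {c1 c2 d1 d2 : ℂ}
    (h : ∀ t, c1 * en (k-1) t + c2 * en (k+1) t = d1 * en (k-1) t + d2 * en (k+1) t) :
    c1 = d1 ∧ c2 = d2 := by
  have h0 := h 0
  rw [en_zero, en_zero, mul_one, mul_one, mul_one, mul_one] at h0
  have hp := h (Real.pi/2)
  have hk : en (k+1) (Real.pi/2) = - en (k-1) (Real.pi/2) := by
    have h5 := en_pi_half (k-1)
    rw [show k-1+2 = k+1 from by ring] at h5
    exact h5
  rw [hk] at hp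
  have hne := en_ne (k-1) (Real.pi/2)
  have h1 : c1 - c2 = d1 - d2 := by
    have h6 : (c1 - c2) * en (k-1) (Real.pi/2) = (d1 - d2) * en (k-1) (Real.pi/2) := by
      linear_combination hp
    exact mul_right_cancel₀ hne h6
  constructor
  · linear_combination (h0 + h1) / 2
  · linear_combination (h0 - h1) / 2

lemma dom_pair {k : ℤ} {c1 c2 d1 d2 : ℂ}
    (h : c1 • eD (k-1) + c2 • eD (k+1) = d1 • eD (k-1) + d2 • eD (k+1)) :
    c1 = d1 ∧ c2 = d2 := by
  apply pair_eq (k := k)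
  intro t
  have h2 := congrArg (fun ψ : Dom => (ψ : ℝ → ℂ) t) h
  simpa using h2

lemma dom_single {k : ℤ} {c d : ℂ} (h : c • eD k = d • eD k) : c = d := by
  have h2 := congrArg (fun ψ : Dom => (ψ : ℝ → ℂ) 0) h
  simpa [en_zero] using h2

lemma rsmul (r : ℝ) (x : Dom) : r • x = (r : ℂ) • x := by
  apply Subtype.ext
  show r • (x : ℝ → ℂ) = (r:ℂ) • (x : ℝ → ℂ)
  funext t
  simp [Complex.real_smul]

lemma sin_en (n : ℤ) (t : ℝ) :
    (Real.sin t : ℂ) * en n t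
      = (Complex.I/2) * en (n-1) t + (-(Complex.I/2)) * en (n+1) t := by
  have h1 : en (n-1) t = en n t * Complex.exp (-((t:ℂ)*I)) := by
    rw [show n - 1 = n + (-1) from by ring, en_add]
    congr 1
    rw [en]
    congr 1
    push_cast
    ring
  have h2 : en (n+1) t = en n t * Complex.exp ((t:ℂ)*I) := by
    rw [en_add]
    congr 1
    rw [en]
    congr 1
    push_cast
    ring
  rw [h1, h2, Complex.ofReal_sin, Complex.sin]
  ring

lemma cos_en (n : ℤ) (t : ℝ) :
    (Real.cos t : ℂ) * en n t
      = ((1:ℂ)/2) * en (n-1) t + ((1:ℂ)/2) * en (n+1) t := by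
  have h1 : en (n-1) t = en n t * Complex.exp (-((t:ℂ)*I)) := by
    rw [show n - 1 = n + (-1) from by ring, en_add]
    congr 1
    rw [en]
    congr 1
    push_cast
    ring
  have h2 : en (n+1) t = en n t * Complex.exp ((t:ℂ)*I) := by
    rw [en_add]
    congr 1
    rw [en]
    congr 1
    push_cast
    ring
  rw [h1, h2, Complex.ofReal_cos, Complex.cos]
  ring

lemma I_sqq : (Complex.I)^2 = -1 := Complex.I_sq
lemma I_cubed : (Complex.I)^3 = -Complex.I := by
  rw [pow_succ, Complex.I_sq]; ring
lemma I_fourth : (Complex.I)^4 = 1 := by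
  rw [show (4:ℕ) = 2*2 from rfl, pow_mul, Complex.I_sq]; ring

-- generators
def ff (r : ℕ) : ℝ × ℝ → ℝ := fun p => p.2 ^ r
def gs (r : ℕ) : ℝ × ℝ → ℝ := fun p => p.2 ^ r * Real.sin p.1
def gc (r : ℕ) : ℝ × ℝ → ℝ := fun p => p.2 ^ r * Real.cos p.1
def fc2 : ℝ × ℝ → ℝ := fun p => Real.cos (2 * p.1)
def flc2 : ℝ × ℝ → ℝ := fun p => p.2 ^ 3 * Real.cos (2 * p.1)

lemma mem_ff (r : ℕ) : ff r ∈ P :=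
  Submodule.subset_span ⟨r, 0, Or.inr (by funext p; simp [ff])⟩

lemma mem_gs (r : ℕ) : gs r ∈ P :=
  Submodule.subset_span ⟨r, 1, Or.inl (by funext p; simp [gs])⟩

lemma mem_gc (r : ℕ) : gc r ∈ P :=
  Submodule.subset_span ⟨r, 1, Or.inr (by funext p; simp [gc])⟩

lemma mem_fc2 : fc2 ∈ P :=
  Submodule.subset_span ⟨0, 2, Or.inr (by funext p; norm_num [fc2])⟩

lemma mem_flc2 : flc2 ∈ P :=
  Submodule.subset_span ⟨3, 2, Or.inr (by funext p; norm_num [flc2])⟩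

-- partial derivatives
lemma pdT_gs (r : ℕ) (p : ℝ × ℝ) : pdTheta (gs r) p = p.2 ^ r * Real.cos p.1 := by
  show deriv (fun t => p.2 ^ r * Real.sin t) p.1 = _
  exact ((Real.hasDerivAt_sin p.1).const_mul (p.2 ^ r)).deriv

lemma pdT_gc (r : ℕ) (p : ℝ × ℝ) : pdTheta (gc r) p = -(p.2 ^ r * Real.sin p.1) := by
  show deriv (fun t => p.2 ^ r * Real.cos t) p.1 = _
  rw [((Real.hasDerivAt_cos p.1).const_mul (p.2 ^ r)).deriv]
  ring

lemma pdE_gs (r : ℕ) (p : ℝ × ℝ) : pdEll (gs r) p = (r : ℝ) * p.2 ^ (r-1) * Real.sin p.1 := by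
  show deriv (fun l => l ^ r * Real.sin p.1) p.2 = _
  exact ((hasDerivAt_pow r p.2).mul_const (Real.sin p.1)).deriv

lemma pdE_gc (r : ℕ) (p : ℝ × ℝ) : pdEll (gc r) p = (r : ℝ) * p.2 ^ (r-1) * Real.cos p.1 := by
  show deriv (fun l => l ^ r * Real.cos p.1) p.2 = _
  exact ((hasDerivAt_pow r p.2).mul_const (Real.cos p.1)).deriv

lemma pdT_ff (r : ℕ) (p : ℝ × ℝ) : pdTheta (ff r) p = 0 := by
  show deriv (fun _ => p.2 ^ r) p.1 = 0
  exact deriv_const _ _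

lemma pdE_ff (r : ℕ) (p : ℝ × ℝ) : pdEll (ff r) p = (r : ℝ) * p.2 ^ (r-1) := by
  show deriv (fun l => l ^ r) p.2 = _
  exact (hasDerivAt_pow r p.2).deriv

lemma pdT_fsin (p : ℝ × ℝ) : pdTheta fsin p = Real.cos p.1 := by
  show deriv (fun t => Real.sin t) p.1 = _
  exact (Real.hasDerivAt_sin p.1).deriv

lemma pdE_fsin (p : ℝ × ℝ) : pdEll fsin p = 0 := by
  show deriv (fun _ => Real.sin p.1) p.2 = 0
  exact deriv_const _ _

lemma pdT_fcos (p : ℝ × ℝ) : pdTheta fcos p = -Real.sin p.1 := by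
  show deriv (fun t => Real.cos t) p.1 = _
  exact (Real.hasDerivAt_cos p.1).deriv

lemma pdE_fcos (p : ℝ × ℝ) : pdEll fcos p = 0 := by
  show deriv (fun _ => Real.cos p.1) p.2 = 0
  exact deriv_const _ _

lemma pdT_fell (p : ℝ × ℝ) : pdTheta fell p = 0 := by
  show deriv (fun _ => p.2) p.1 = 0
  exact deriv_const _ _

lemma pdE_fell (p : ℝ × ℝ) : pdEll fell p = 1 := by
  show deriv (fun l => l) p.2 = 1
  exact deriv_id p.2

-- poisson bracket computations
lemma pbA : pb fell (ff 2) = 0 := by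
  funext p
  simp [pb, pdE_fell, pdT_fell, pdT_ff, pdE_ff]

lemma pbB : pb fell (ff 3) = 0 := by
  funext p
  simp [pb, pdE_fell, pdT_fell, pdT_ff, pdE_ff]

lemma pbC : pb (ff 2) fsin = (2:ℝ) • gc 1 := by
  funext p
  simp only [pb, pdE_ff, pdT_fsin, pdT_ff, pdE_fsin, Pi.smul_apply, smul_eq_mul, gc]
  norm_num
  ring

lemma pbD : pb (ff 2) fcos = (-2:ℝ) • gs 1 := by
  funext p
  simp only [pb, pdE_ff, pdT_fcos, pdT_ff, pdE_fcos, Pi.smul_apply, smul_eq_mul, gs]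
  norm_num
  ring

lemma pbE : pb (ff 2) (gs 1) = (2:ℝ) • gc 2 := by
  funext p
  simp only [pb, pdE_ff, pdT_gs, pdT_ff, pdE_gs, Pi.smul_apply, smul_eq_mul, gc]
  norm_num
  ring

lemma pbF : pb (ff 2) (gc 1) = (-2:ℝ) • gs 2 := by
  funext p
  simp only [pb, pdE_ff, pdT_gc, pdT_ff, pdE_gc, Pi.smul_apply, smul_eq_mul, gs]
  norm_num
  ring

lemma pbG : pb (ff 2) (gs 2) = (2:ℝ) • gc 3 := by
  funext p
  simp only [pb, pdE_ff, pdT_gs, pdT_ff, pdE_gs, Pi.smul_apply, smul_eq_mul, gc]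
  norm_num
  ring

lemma pbH : pb (ff 2) (gc 2) = (-2:ℝ) • gs 3 := by
  funext p
  simp only [pb, pdE_ff, pdT_gc, pdT_ff, pdE_gc, Pi.smul_apply, smul_eq_mul, gs]
  norm_num
  ring

lemma pbI : pb (ff 3) fsin = (3:ℝ) • gc 2 := by
  funext p
  simp only [pb, pdE_ff, pdT_fsin, pdT_ff, pdE_fsin, Pi.smul_apply, smul_eq_mul, gc]
  norm_num
  ring

lemma pbJ : pb (gc 1) fsin = (1/2:ℝ) • fone + (1/2:ℝ) • fc2 := by
  funext p
  simp only [pb, pdE_gc, pdT_fsin, pdT_gc, pdE_fsin, Pi.add_apply, Pi.smul_apply,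
    smul_eq_mul, fone, fc2]
  norm_num
  rw [show Real.cos p.1 * Real.cos p.1 = Real.cos p.1 ^ 2 from by ring, Real.cos_sq]
  ring

lemma pbK : pb (gs 1) fcos = (-(1/2):ℝ) • fone + (1/2:ℝ) • fc2 := by
  funext p
  simp only [pb, pdE_gs, pdT_fcos, pdT_gs, pdE_fcos, Pi.add_apply, Pi.smul_apply,
    smul_eq_mul, fone, fc2]
  norm_num
  rw [Real.cos_two_mul]
  nlinarith [Real.sin_sq_add_cos_sq p.1]

lemma pbL : pb (gc 3) (gs 1) = (2:ℝ) • ff 3 + flc2 := by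
  funext p
  simp only [pb, pdE_gc, pdT_gs, pdT_gc, pdE_gs, Pi.add_apply, Pi.smul_apply,
    smul_eq_mul, ff, flc2]
  norm_num
  rw [Real.cos_two_mul]
  linear_combination (p.2:ℝ)^3 * Real.sin_sq_add_cos_sq p.1

lemma pbM : pb (gs 3) (gc 1) = (-2:ℝ) • ff 3 + flc2 := by
  funext p
  simp only [pb, pdE_gs, pdT_gc, pdT_gs, pdE_gc, Pi.add_apply, Pi.smul_apply,
    smul_eq_mul, ff, flc2]
  norm_num
  rw [Real.cos_two_mul]
  linear_combination (-3:ℝ) * (p.2:ℝ)^3 * Real.sin_sq_add_cos_sq p.1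

-- P elements
def pOne : P := ⟨fone, fone_mem_P⟩
def pEll : P := ⟨fell, fell_mem_P⟩
def pSin : P := ⟨fsin, fsin_mem_P⟩
def pCos : P := ⟨fcos, fcos_mem_P⟩
def pF (r : ℕ) : P := ⟨ff r, mem_ff r⟩
def pGs (r : ℕ) : P := ⟨gs r, mem_gs r⟩
def pGc (r : ℕ) : P := ⟨gc r, mem_gc r⟩

end NG

open NG Complex
set_option maxHeartbeats 1000000
/-- No-go theorem for the cylinder: there is no admissible quantization of the full
polynomial algebra `P` of type (i)′, for any value of the parameter `ν`. -/
theorem stmt3 (ν : ℝ) : ¬ ∃ Q : P →ₗ[ℝ] (Dom →ₗ[ℂ] Dom), IsQuant P ν Q := by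
  rintro ⟨Q, hQ⟩
  -- action of sin and cos multiplication operators on the basis
  have hS : ∀ n : ℤ, Q ⟨fsin, fsin_mem_P⟩ (eD n)
      = (Complex.I/2) • eD (n-1) + (-(Complex.I/2)) • eD (n+1) := by
    intro n
    apply Subtype.ext
    funext t
    have h1 := hQ.map_sin fsin_mem_P (eD n) t
    rw [eD_coe] at h1
    show (Q ⟨fsin, fsin_mem_P⟩ (eD n) : ℝ → ℂ) t = _
    rw [h1, sin_en n t]
    simp [Pi.add_apply, Pi.smul_apply, smul_eq_mul]
  have hC : ∀ n : ℤ, Q ⟨fcos, fcos_mem_P⟩ (eD n)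
      = ((1:ℂ)/2) • eD (n-1) + ((1:ℂ)/2) • eD (n+1) := by
    intro n
    apply Subtype.ext
    funext t
    have h1 := hQ.map_cos fcos_mem_P (eD n) t
    rw [eD_coe] at h1
    show (Q ⟨fcos, fcos_mem_P⟩ (eD n) : ℝ → ℂ) t = _
    rw [h1, cos_en n t]
    simp [Pi.add_apply, Pi.smul_apply, smul_eq_mul]
  -- operators commuting with Q(ℓ) are diagonal
  have hLap : ∀ (ψ : Dom) (t : ℝ), (Q ⟨fell, fell_mem_P⟩ ψ : ℝ → ℂ) t
      = -Complex.I * deriv (ψ : ℝ → ℂ) t + (ν:ℂ) * (ψ : ℝ → ℂ) t := hQ.map_ell fell_mem_P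
  have hdiag : ∀ (A : Dom →ₗ[ℂ] Dom),
      (∀ ψ, Q ⟨fell, fell_mem_P⟩ (A ψ) = A (Q ⟨fell, fell_mem_P⟩ ψ)) →
      ∀ n : ℤ, A (eD n) = ((A (eD n) : ℝ → ℂ) 0) • eD n := by
    intro A hA n
    apply eigen
    intro t
    have hLe : Q ⟨fell, fell_mem_P⟩ (eD n) = (((n : ℝ) + ν : ℝ) : ℂ) • eD n := by
      apply Subtype.ext
      funext s
      have h1 := hLap (eD n) s
      rw [eD_coe, en_deriv] at h1
      show (Q ⟨fell, fell_mem_P⟩ (eD n) : ℝ → ℂ) s = _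
      rw [h1]
      show _ = (((n:ℝ) + ν : ℝ) : ℂ) • en n s
      rw [smul_eq_mul]
      push_cast
      linear_combination (-(n:ℂ) * en n s) * Complex.I_sq
    have h2 : Q ⟨fell, fell_mem_P⟩ (A (eD n)) = (((n:ℝ) + ν : ℝ):ℂ) • A (eD n) := by
      rw [hA, hLe, map_smul]
    have h3 := congrArg (fun ψ : Dom => (ψ : ℝ → ℂ) t) h2
    simp only [SetLike.val_smul, Pi.smul_apply, smul_eq_mul] at h3
    rw [hLap (A (eD n)) t] at h3
    push_cast at h3
    linear_combination Complex.I * h3 + (deriv ((A (eD n) : ℝ → ℂ)) t) * Complex.I_sq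
  -- Q(ℓ²) and Q(ℓ³) are diagonal
  have hcomm2 : ∀ ψ, Q ⟨fell, fell_mem_P⟩ (Q ⟨ff 2, mem_ff 2⟩ ψ)
      = Q ⟨ff 2, mem_ff 2⟩ (Q ⟨fell, fell_mem_P⟩ ψ) := by
    have mpb : pb fell (ff 2) ∈ P := by rw [pbA]; exact P.zero_mem
    have hbr : Q ⟨pb fell (ff 2), mpb⟩ = Complex.I • (Q ⟨fell, fell_mem_P⟩ ∘ₗ Q ⟨ff 2, mem_ff 2⟩
        - Q ⟨ff 2, mem_ff 2⟩ ∘ₗ Q ⟨fell, fell_mem_P⟩) :=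
      hQ.map_bracket ⟨fell, fell_mem_P⟩ ⟨ff 2, mem_ff 2⟩ mpb
    have hz : (⟨pb fell (ff 2), mpb⟩ : P) = 0 := Subtype.ext (by exact pbA)
    rw [hz, map_zero] at hbr
    have h2 : Q ⟨fell, fell_mem_P⟩ ∘ₗ Q ⟨ff 2, mem_ff 2⟩
        = Q ⟨ff 2, mem_ff 2⟩ ∘ₗ Q ⟨fell, fell_mem_P⟩ := by
      rcases smul_eq_zero.mp hbr.symm with h | h
      · exact absurd h Complex.I_ne_zero
      · exact sub_eq_zero.mp h
    intro ψ
    have h3 := congrArg (fun T : Dom →ₗ[ℂ] Dom => T ψ) h2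
    simpa using h3
  have hcomm3 : ∀ ψ, Q ⟨fell, fell_mem_P⟩ (Q ⟨ff 3, mem_ff 3⟩ ψ)
      = Q ⟨ff 3, mem_ff 3⟩ (Q ⟨fell, fell_mem_P⟩ ψ) := by
    have mpb : pb fell (ff 3) ∈ P := by rw [pbB]; exact P.zero_mem
    have hbr : Q ⟨pb fell (ff 3), mpb⟩ = Complex.I • (Q ⟨fell, fell_mem_P⟩ ∘ₗ Q ⟨ff 3, mem_ff 3⟩
        - Q ⟨ff 3, mem_ff 3⟩ ∘ₗ Q ⟨fell, fell_mem_P⟩) :=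
      hQ.map_bracket ⟨fell, fell_mem_P⟩ ⟨ff 3, mem_ff 3⟩ mpb
    have hz : (⟨pb fell (ff 3), mpb⟩ : P) = 0 := Subtype.ext (by exact pbB)
    rw [hz, map_zero] at hbr
    have h2 : Q ⟨fell, fell_mem_P⟩ ∘ₗ Q ⟨ff 3, mem_ff 3⟩
        = Q ⟨ff 3, mem_ff 3⟩ ∘ₗ Q ⟨fell, fell_mem_P⟩ := by
      rcases smul_eq_zero.mp hbr.symm with h | h
      · exact absurd h Complex.I_ne_zero
      · exact sub_eq_zero.mp h
    intro ψ
    have h3 := congrArg (fun T : Dom →ₗ[ℂ] Dom => T ψ) h2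
    simpa using h3
  obtain ⟨α, hA2⟩ : ∃ α : ℤ → ℂ, ∀ n : ℤ, Q ⟨ff 2, mem_ff 2⟩ (eD n) = α n • eD n :=
    ⟨fun n => ((Q ⟨ff 2, mem_ff 2⟩ (eD n) : ℝ → ℂ) 0), hdiag _ hcomm2⟩
  obtain ⟨β, hA3⟩ : ∃ β : ℤ → ℂ, ∀ n : ℤ, Q ⟨ff 3, mem_ff 3⟩ (eD n) = β n • eD n :=
    ⟨fun n => ((Q ⟨ff 3, mem_ff 3⟩ (eD n) : ℝ → ℂ) 0), hdiag _ hcomm3⟩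
  -- action of Q(ℓ sinθ), Q(ℓ cosθ)
  have hY1 : ∀ n : ℤ, Q ⟨gc 1, mem_gc 1⟩ (eD n)
      = ((α n - α (n-1))/4) • eD (n-1) + ((α (n+1) - α n)/4) • eD (n+1) := by
    have mpb : pb (ff 2) fsin ∈ P := by rw [pbC]; exact P.smul_mem _ (mem_gc 1)
    have hbr : Q ⟨pb (ff 2) fsin, mpb⟩ = Complex.I • (Q ⟨ff 2, mem_ff 2⟩ ∘ₗ Q ⟨fsin, fsin_mem_P⟩
        - Q ⟨fsin, fsin_mem_P⟩ ∘ₗ Q ⟨ff 2, mem_ff 2⟩) :=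
      hQ.map_bracket ⟨ff 2, mem_ff 2⟩ ⟨fsin, fsin_mem_P⟩ mpb
    have heq : (⟨pb (ff 2) fsin, mpb⟩ : P) = (2:ℝ) • ⟨gc 1, mem_gc 1⟩ := Subtype.ext (by exact pbC)
    rw [heq, map_smul] at hbr
    intro n
    have h5 := congrArg (fun T : Dom →ₗ[ℂ] Dom => T (eD n)) hbr
    simp only [LinearMap.smul_apply, LinearMap.sub_apply, LinearMap.comp_apply] at h5
    rw [rsmul] at h5
    push_cast at h5
    have h7 : (2:ℂ) • Q ⟨gc 1, mem_gc 1⟩ (eD n)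
        = (2:ℂ) • (((α n - α (n-1))/4) • eD (n-1) + ((α (n+1) - α n)/4) • eD (n+1)) := by
      rw [h5]
      simp only [hS, hA2, map_add, map_smul]
      match_scalars <;> (first | ring1 | (ring_nf; try simp only [NG.I_sqq, NG.I_cubed, NG.I_fourth]; try ring1))
    exact smul_right_injective Dom (by norm_num : (2:ℂ) ≠ 0) h7
  have hX1 : ∀ n : ℤ, Q ⟨gs 1, mem_gs 1⟩ (eD n)
      = (Complex.I * (α n - α (n-1))/4) • eD (n-1)
        + (-(Complex.I * (α (n+1) - α n)/4)) • eD (n+1) := by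
    have mpb : pb (ff 2) fcos ∈ P := by rw [pbD]; exact P.smul_mem _ (mem_gs 1)
    have hbr : Q ⟨pb (ff 2) fcos, mpb⟩ = Complex.I • (Q ⟨ff 2, mem_ff 2⟩ ∘ₗ Q ⟨fcos, fcos_mem_P⟩
        - Q ⟨fcos, fcos_mem_P⟩ ∘ₗ Q ⟨ff 2, mem_ff 2⟩) :=
      hQ.map_bracket ⟨ff 2, mem_ff 2⟩ ⟨fcos, fcos_mem_P⟩ mpb
    have heq : (⟨pb (ff 2) fcos, mpb⟩ : P) = (-2:ℝ) • ⟨gs 1, mem_gs 1⟩ := Subtype.ext (by exact pbD)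
    rw [heq, map_smul] at hbr
    intro n
    have h5 := congrArg (fun T : Dom →ₗ[ℂ] Dom => T (eD n)) hbr
    simp only [LinearMap.smul_apply, LinearMap.sub_apply, LinearMap.comp_apply] at h5
    rw [rsmul] at h5
    push_cast at h5
    have h7 : (-2:ℂ) • Q ⟨gs 1, mem_gs 1⟩ (eD n)
        = (-2:ℂ) • ((Complex.I * (α n - α (n-1))/4) • eD (n-1)
            + (-(Complex.I * (α (n+1) - α n)/4)) • eD (n+1)) := by
      rw [h5]
      simp only [hC, hA2, map_add, map_smul]
      match_scalars <;> (first | ring1 | (ring_nf; try simp only [NG.I_sqq, NG.I_cubed, NG.I_fourth]; try ring1))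
    exact smul_right_injective Dom (by norm_num : (-2:ℂ) ≠ 0) h7
  -- action of Q(ℓ² sinθ), Q(ℓ² cosθ)
  have hY2 : ∀ n : ℤ, Q ⟨gc 2, mem_gc 2⟩ (eD n)
      = (((α n - α (n-1))/2)^2/2) • eD (n-1) + (((α (n+1) - α n)/2)^2/2) • eD (n+1) := by
    have mpb : pb (ff 2) (gs 1) ∈ P := by rw [pbE]; exact P.smul_mem _ (mem_gc 2)
    have hbr : Q ⟨pb (ff 2) (gs 1), mpb⟩ = Complex.I • (Q ⟨ff 2, mem_ff 2⟩ ∘ₗ Q ⟨gs 1, mem_gs 1⟩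
        - Q ⟨gs 1, mem_gs 1⟩ ∘ₗ Q ⟨ff 2, mem_ff 2⟩) :=
      hQ.map_bracket ⟨ff 2, mem_ff 2⟩ ⟨gs 1, mem_gs 1⟩ mpb
    have heq : (⟨pb (ff 2) (gs 1), mpb⟩ : P) = (2:ℝ) • ⟨gc 2, mem_gc 2⟩ := Subtype.ext (by exact pbE)
    rw [heq, map_smul] at hbr
    intro n
    have h5 := congrArg (fun T : Dom →ₗ[ℂ] Dom => T (eD n)) hbr
    simp only [LinearMap.smul_apply, LinearMap.sub_apply, LinearMap.comp_apply] at h5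
    rw [rsmul] at h5
    push_cast at h5
    have h7 : (2:ℂ) • Q ⟨gc 2, mem_gc 2⟩ (eD n)
        = (2:ℂ) • ((((α n - α (n-1))/2)^2/2) • eD (n-1)
            + (((α (n+1) - α n)/2)^2/2) • eD (n+1)) := by
      rw [h5]
      simp only [hX1, hA2, map_add, map_smul]
      match_scalars <;> (first | ring1 | (ring_nf; try simp only [NG.I_sqq, NG.I_cubed, NG.I_fourth]; try ring1))
    exact smul_right_injective Dom (by norm_num : (2:ℂ) ≠ 0) h7
  have hX2 : ∀ n : ℤ, Q ⟨gs 2, mem_gs 2⟩ (eD n)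
      = (Complex.I * ((α n - α (n-1))/2)^2/2) • eD (n-1)
        + (-(Complex.I * ((α (n+1) - α n)/2)^2/2)) • eD (n+1) := by
    have mpb : pb (ff 2) (gc 1) ∈ P := by rw [pbF]; exact P.smul_mem _ (mem_gs 2)
    have hbr : Q ⟨pb (ff 2) (gc 1), mpb⟩ = Complex.I • (Q ⟨ff 2, mem_ff 2⟩ ∘ₗ Q ⟨gc 1, mem_gc 1⟩
        - Q ⟨gc 1, mem_gc 1⟩ ∘ₗ Q ⟨ff 2, mem_ff 2⟩) :=
      hQ.map_bracket ⟨ff 2, mem_ff 2⟩ ⟨gc 1, mem_gc 1⟩ mpb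
    have heq : (⟨pb (ff 2) (gc 1), mpb⟩ : P) = (-2:ℝ) • ⟨gs 2, mem_gs 2⟩ := Subtype.ext (by exact pbF)
    rw [heq, map_smul] at hbr
    intro n
    have h5 := congrArg (fun T : Dom →ₗ[ℂ] Dom => T (eD n)) hbr
    simp only [LinearMap.smul_apply, LinearMap.sub_apply, LinearMap.comp_apply] at h5
    rw [rsmul] at h5
    push_cast at h5
    have h7 : (-2:ℂ) • Q ⟨gs 2, mem_gs 2⟩ (eD n)
        = (-2:ℂ) • ((Complex.I * ((α n - α (n-1))/2)^2/2) • eD (n-1)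
            + (-(Complex.I * ((α (n+1) - α n)/2)^2/2)) • eD (n+1)) := by
      rw [h5]
      simp only [hY1, hA2, map_add, map_smul]
      match_scalars <;> (first | ring1 | (ring_nf; try simp only [NG.I_sqq, NG.I_cubed, NG.I_fourth]; try ring1))
    exact smul_right_injective Dom (by norm_num : (-2:ℂ) ≠ 0) h7
  -- action of Q(ℓ³ sinθ), Q(ℓ³ cosθ)
  have hY3 : ∀ n : ℤ, Q ⟨gc 3, mem_gc 3⟩ (eD n)
      = (((α n - α (n-1))/2)^3/2) • eD (n-1) + (((α (n+1) - α n)/2)^3/2) • eD (n+1) := by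
    have mpb : pb (ff 2) (gs 2) ∈ P := by rw [pbG]; exact P.smul_mem _ (mem_gc 3)
    have hbr : Q ⟨pb (ff 2) (gs 2), mpb⟩ = Complex.I • (Q ⟨ff 2, mem_ff 2⟩ ∘ₗ Q ⟨gs 2, mem_gs 2⟩
        - Q ⟨gs 2, mem_gs 2⟩ ∘ₗ Q ⟨ff 2, mem_ff 2⟩) :=
      hQ.map_bracket ⟨ff 2, mem_ff 2⟩ ⟨gs 2, mem_gs 2⟩ mpb
    have heq : (⟨pb (ff 2) (gs 2), mpb⟩ : P) = (2:ℝ) • ⟨gc 3, mem_gc 3⟩ := Subtype.ext (by exact pbG)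
    rw [heq, map_smul] at hbr
    intro n
    have h5 := congrArg (fun T : Dom →ₗ[ℂ] Dom => T (eD n)) hbr
    simp only [LinearMap.smul_apply, LinearMap.sub_apply, LinearMap.comp_apply] at h5
    rw [rsmul] at h5
    push_cast at h5
    have h7 : (2:ℂ) • Q ⟨gc 3, mem_gc 3⟩ (eD n)
        = (2:ℂ) • ((((α n - α (n-1))/2)^3/2) • eD (n-1)
            + (((α (n+1) - α n)/2)^3/2) • eD (n+1)) := by
      rw [h5]
      simp only [hX2, hA2, map_add, map_smul]
      match_scalars <;> (first | ring1 | (ring_nf; try simp only [NG.I_sqq, NG.I_cubed, NG.I_fourth]; try ring1))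
    exact smul_right_injective Dom (by norm_num : (2:ℂ) ≠ 0) h7
  have hX3 : ∀ n : ℤ, Q ⟨gs 3, mem_gs 3⟩ (eD n)
      = (Complex.I * ((α n - α (n-1))/2)^3/2) • eD (n-1)
        + (-(Complex.I * ((α (n+1) - α n)/2)^3/2)) • eD (n+1) := by
    have mpb : pb (ff 2) (gc 2) ∈ P := by rw [pbH]; exact P.smul_mem _ (mem_gs 3)
    have hbr : Q ⟨pb (ff 2) (gc 2), mpb⟩ = Complex.I • (Q ⟨ff 2, mem_ff 2⟩ ∘ₗ Q ⟨gc 2, mem_gc 2⟩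
        - Q ⟨gc 2, mem_gc 2⟩ ∘ₗ Q ⟨ff 2, mem_ff 2⟩) :=
      hQ.map_bracket ⟨ff 2, mem_ff 2⟩ ⟨gc 2, mem_gc 2⟩ mpb
    have heq : (⟨pb (ff 2) (gc 2), mpb⟩ : P) = (-2:ℝ) • ⟨gs 3, mem_gs 3⟩ := Subtype.ext (by exact pbH)
    rw [heq, map_smul] at hbr
    intro n
    have h5 := congrArg (fun T : Dom →ₗ[ℂ] Dom => T (eD n)) hbr
    simp only [LinearMap.smul_apply, LinearMap.sub_apply, LinearMap.comp_apply] at h5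
    rw [rsmul] at h5
    push_cast at h5
    have h7 : (-2:ℂ) • Q ⟨gs 3, mem_gs 3⟩ (eD n)
        = (-2:ℂ) • ((Complex.I * ((α n - α (n-1))/2)^3/2) • eD (n-1)
            + (-(Complex.I * ((α (n+1) - α n)/2)^3/2)) • eD (n+1)) := by
      rw [h5]
      simp only [hY2, hA2, map_add, map_smul]
      match_scalars <;> (first | ring1 | (ring_nf; try simp only [NG.I_sqq, NG.I_cubed, NG.I_fourth]; try ring1))
    exact smul_right_injective Dom (by norm_num : (-2:ℂ) ≠ 0) h7
  -- relation (RG): from {ℓ³, sinθ} = 3 ℓ² cosθ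
  have hRG : ∀ n : ℤ, β (n+1) - β n = 3 * ((α (n+1) - α n)/2)^2 := by
    have mpb : pb (ff 3) fsin ∈ P := by rw [pbI]; exact P.smul_mem _ (mem_gc 2)
    have hbr : Q ⟨pb (ff 3) fsin, mpb⟩ = Complex.I • (Q ⟨ff 3, mem_ff 3⟩ ∘ₗ Q ⟨fsin, fsin_mem_P⟩
        - Q ⟨fsin, fsin_mem_P⟩ ∘ₗ Q ⟨ff 3, mem_ff 3⟩) :=
      hQ.map_bracket ⟨ff 3, mem_ff 3⟩ ⟨fsin, fsin_mem_P⟩ mpb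
    have heq : (⟨pb (ff 3) fsin, mpb⟩ : P) = (3:ℝ) • ⟨gc 2, mem_gc 2⟩ := Subtype.ext (by exact pbI)
    rw [heq, map_smul] at hbr
    intro n
    have h5 := congrArg (fun T : Dom →ₗ[ℂ] Dom => T (eD n)) hbr
    simp only [LinearMap.smul_apply, LinearMap.sub_apply, LinearMap.comp_apply] at h5
    rw [rsmul] at h5
    push_cast at h5
    have h6 : ((β n - β (n-1))/2) • eD (n-1) + ((β (n+1) - β n)/2) • eD (n+1)
        = ((3:ℂ) * ((α n - α (n-1))/2)^2/2) • eD (n-1)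
          + ((3:ℂ) * ((α (n+1) - α n)/2)^2/2) • eD (n+1) := by
      calc ((β n - β (n-1))/2) • eD (n-1) + ((β (n+1) - β n)/2) • eD (n+1)
          = Complex.I • (Q ⟨ff 3, mem_ff 3⟩ (Q ⟨fsin, fsin_mem_P⟩ (eD n))
              - Q ⟨fsin, fsin_mem_P⟩ (Q ⟨ff 3, mem_ff 3⟩ (eD n))) := by
            simp only [hS, hA3, map_add, map_smul]
            match_scalars <;> (first | ring1 | (ring_nf; try simp only [NG.I_sqq, NG.I_cubed, NG.I_fourth]; try ring1))
        _ = (3:ℂ) • Q ⟨gc 2, mem_gc 2⟩ (eD n) := h5.symm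
        _ = _ := by
            rw [hY2 n]
            match_scalars <;> (first | ring1 | (ring_nf; try simp only [NG.I_sqq, NG.I_cubed, NG.I_fourth]; try ring1))
    have h7 := dom_pair h6
    linear_combination 2 * h7.2
  -- relation (RD): from {ℓcosθ, sinθ} - {ℓsinθ, cosθ} = 1
  have hRD : ∀ n : ℤ, (α (n+1) - α n)/2 - (α n - α (n-1))/2 = 1 := by
    have mpbJ : pb (gc 1) fsin ∈ P := by
      rw [pbJ]; exact P.add_mem (P.smul_mem _ fone_mem_P) (P.smul_mem _ mem_fc2)
    have mpbK : pb (gs 1) fcos ∈ P := by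
      rw [pbK]; exact P.add_mem (P.smul_mem _ fone_mem_P) (P.smul_mem _ mem_fc2)
    have hbrJ : Q ⟨pb (gc 1) fsin, mpbJ⟩ = Complex.I • (Q ⟨gc 1, mem_gc 1⟩ ∘ₗ Q ⟨fsin, fsin_mem_P⟩
        - Q ⟨fsin, fsin_mem_P⟩ ∘ₗ Q ⟨gc 1, mem_gc 1⟩) :=
      hQ.map_bracket ⟨gc 1, mem_gc 1⟩ ⟨fsin, fsin_mem_P⟩ mpbJ
    have hbrK : Q ⟨pb (gs 1) fcos, mpbK⟩ = Complex.I • (Q ⟨gs 1, mem_gs 1⟩ ∘ₗ Q ⟨fcos, fcos_mem_P⟩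
        - Q ⟨fcos, fcos_mem_P⟩ ∘ₗ Q ⟨gs 1, mem_gs 1⟩) :=
      hQ.map_bracket ⟨gs 1, mem_gs 1⟩ ⟨fcos, fcos_mem_P⟩ mpbK
    have hsub : (⟨pb (gc 1) fsin, mpbJ⟩ : P) - ⟨pb (gs 1) fcos, mpbK⟩ = ⟨fone, fone_mem_P⟩ := by
      apply Subtype.ext
      show pb (gc 1) fsin - pb (gs 1) fcos = fone
      rw [pbJ, pbK]
      funext p
      simp only [Pi.sub_apply, Pi.add_apply, Pi.smul_apply, smul_eq_mul, fone]
      ring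
    have hidQ : Q ⟨pb (gc 1) fsin, mpbJ⟩ - Q ⟨pb (gs 1) fcos, mpbK⟩ = LinearMap.id := by
      have h0 := map_sub Q (⟨pb (gc 1) fsin, mpbJ⟩ : P) (⟨pb (gs 1) fcos, mpbK⟩ : P)
      rw [hsub] at h0
      rw [← h0]
      exact hQ.map_one fone_mem_P
    intro n
    have h5 := congrArg (fun T : Dom →ₗ[ℂ] Dom => T (eD n)) hidQ
    simp only [LinearMap.sub_apply, LinearMap.id_apply] at h5
    have h5J := congrArg (fun T : Dom →ₗ[ℂ] Dom => T (eD n)) hbrJ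
    have h5K := congrArg (fun T : Dom →ₗ[ℂ] Dom => T (eD n)) hbrK
    simp only [LinearMap.smul_apply, LinearMap.sub_apply, LinearMap.comp_apply] at h5J h5K
    rw [h5J, h5K] at h5
    have h6 : ((α (n+1) - α n)/2 - (α n - α (n-1))/2) • eD n = (1:ℂ) • eD n := by
      calc ((α (n+1) - α n)/2 - (α n - α (n-1))/2) • eD n
          = Complex.I • (Q ⟨gc 1, mem_gc 1⟩ (Q ⟨fsin, fsin_mem_P⟩ (eD n))
              - Q ⟨fsin, fsin_mem_P⟩ (Q ⟨gc 1, mem_gc 1⟩ (eD n)))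
            - Complex.I • (Q ⟨gs 1, mem_gs 1⟩ (Q ⟨fcos, fcos_mem_P⟩ (eD n))
              - Q ⟨fcos, fcos_mem_P⟩ (Q ⟨gs 1, mem_gs 1⟩ (eD n))) := by
            simp only [hS, hC, hX1, hY1, map_add, map_smul]
            rw [show n-1-1 = n-2 from by ring, show n-1+1 = n from by ring,
                show n+1-1 = n from by ring, show n+1+1 = n+2 from by ring]
            match_scalars <;> (first | ring1 | (ring_nf; try simp only [NG.I_sqq, NG.I_cubed, NG.I_fourth]; try ring1))
        _ = (1:ℂ) • eD n := by rw [one_smul]; exact h5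
    exact dom_single h6
  -- relation (RF): from {ℓ³cosθ, ℓsinθ} - {ℓ³sinθ, ℓcosθ} = 4ℓ³
  have hRF : ∀ n : ℤ, ((α (n+1) - α n)/2)^4 - ((α n - α (n-1))/2)^4 = 4 * β n := by
    have mpbL : pb (gc 3) (gs 1) ∈ P := by
      rw [pbL]; exact P.add_mem (P.smul_mem _ (mem_ff 3)) mem_flc2
    have mpbM : pb (gs 3) (gc 1) ∈ P := by
      rw [pbM]; exact P.add_mem (P.smul_mem _ (mem_ff 3)) mem_flc2
    have hbrL : Q ⟨pb (gc 3) (gs 1), mpbL⟩ = Complex.I • (Q ⟨gc 3, mem_gc 3⟩ ∘ₗ Q ⟨gs 1, mem_gs 1⟩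
        - Q ⟨gs 1, mem_gs 1⟩ ∘ₗ Q ⟨gc 3, mem_gc 3⟩) :=
      hQ.map_bracket ⟨gc 3, mem_gc 3⟩ ⟨gs 1, mem_gs 1⟩ mpbL
    have hbrM : Q ⟨pb (gs 3) (gc 1), mpbM⟩ = Complex.I • (Q ⟨gs 3, mem_gs 3⟩ ∘ₗ Q ⟨gc 1, mem_gc 1⟩
        - Q ⟨gc 1, mem_gc 1⟩ ∘ₗ Q ⟨gs 3, mem_gs 3⟩) :=
      hQ.map_bracket ⟨gs 3, mem_gs 3⟩ ⟨gc 1, mem_gc 1⟩ mpbM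
    have hsub : (⟨pb (gc 3) (gs 1), mpbL⟩ : P) - ⟨pb (gs 3) (gc 1), mpbM⟩
        = (4:ℝ) • ⟨ff 3, mem_ff 3⟩ := by
      apply Subtype.ext
      show pb (gc 3) (gs 1) - pb (gs 3) (gc 1) = (4:ℝ) • ff 3
      rw [pbL, pbM]
      funext p
      simp only [Pi.sub_apply, Pi.add_apply, Pi.smul_apply, smul_eq_mul]
      ring
    have hidQ : Q ⟨pb (gc 3) (gs 1), mpbL⟩ - Q ⟨pb (gs 3) (gc 1), mpbM⟩
        = (4:ℝ) • Q ⟨ff 3, mem_ff 3⟩ := by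
      have h0 := map_sub Q (⟨pb (gc 3) (gs 1), mpbL⟩ : P) (⟨pb (gs 3) (gc 1), mpbM⟩ : P)
      rw [hsub, map_smul] at h0
      exact h0.symm
    intro n
    have h5 := congrArg (fun T : Dom →ₗ[ℂ] Dom => T (eD n)) hidQ
    simp only [LinearMap.sub_apply, LinearMap.smul_apply] at h5
    rw [rsmul] at h5
    push_cast at h5
    have h5L := congrArg (fun T : Dom →ₗ[ℂ] Dom => T (eD n)) hbrL
    have h5M := congrArg (fun T : Dom →ₗ[ℂ] Dom => T (eD n)) hbrM
    simp only [LinearMap.smul_apply, LinearMap.sub_apply, LinearMap.comp_apply] at h5L h5M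
    rw [h5L, h5M] at h5
    have h6 : (((α (n+1) - α n)/2)^4 - ((α n - α (n-1))/2)^4) • eD n = ((4:ℂ) * β n) • eD n := by
      calc (((α (n+1) - α n)/2)^4 - ((α n - α (n-1))/2)^4) • eD n
          = Complex.I • (Q ⟨gc 3, mem_gc 3⟩ (Q ⟨gs 1, mem_gs 1⟩ (eD n))
              - Q ⟨gs 1, mem_gs 1⟩ (Q ⟨gc 3, mem_gc 3⟩ (eD n)))
            - Complex.I • (Q ⟨gs 3, mem_gs 3⟩ (Q ⟨gc 1, mem_gc 1⟩ (eD n))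
              - Q ⟨gc 1, mem_gc 1⟩ (Q ⟨gs 3, mem_gs 3⟩ (eD n))) := by
            simp only [hX1, hY1, hX3, hY3, map_add, map_smul]
            rw [show n-1-1 = n-2 from by ring, show n-1+1 = n from by ring,
                show n+1-1 = n from by ring, show n+1+1 = n+2 from by ring]
            match_scalars <;> (first | ring1 | (ring_nf; try simp only [NG.I_sqq, NG.I_cubed, NG.I_fourth]; try ring1))
        _ = (4:ℂ) • Q ⟨ff 3, mem_ff 3⟩ (eD n) := h5
        _ = ((4:ℂ) * β n) • eD n := by rw [hA3 n, smul_smul]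
    exact dom_single h6
  -- the contradiction
  have e01 : (0:ℤ) + 1 = 1 := by norm_num
  have e0m : (0:ℤ) - 1 = -1 := by norm_num
  have e11 : (1:ℤ) + 1 = 2 := by norm_num
  have e1m : (1:ℤ) - 1 = 0 := by norm_num
  have R1_0 := hRD 0
  have R1_1 := hRD 1
  have R2_0 := hRG 0
  have R3_0 := hRF 0
  have R3_1 := hRF 1
  rw [e01] at R1_0 R2_0 R3_0
  rw [e0m] at R1_0 R3_0
  rw [e11] at R1_1 R3_1
  rw [e1m] at R1_1 R3_1
  have e1 : α (-1) = 2*α 0 - α 1 + 2 := by linear_combination 2 * R1_0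
  have e2 : α 2 = 2*α 1 - α 0 + 2 := by linear_combination 2 * R1_1
  rw [e1] at R3_0
  rw [e2] at R3_1
  have hfin : (2:ℂ) = 0 := by linear_combination R3_1 - R3_0 + 4 * R2_0
  exact two_ne_zero hfin

end
end

section
/- There is no ℝ-linear map Q : P → ℝ such that Q(1) = 1 and Q({f, g}) = 0 for all f, g ∈ P. (In particular, P admits no one-dimensional quantization.) -/
noncomputable section
/-- `P` admits no one-dimensional quantization. -/
theorem stmt4 :
    ¬ ∃ Q : P →ₗ[ℝ] ℝ,
        Q ⟨fone, fone_mem_P⟩ = 1 ∧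
        ∀ (f g : P) (h : pb f g ∈ P), Q ⟨pb f g, h⟩ = 0 := by

  rintro ⟨Q, hone, hbr⟩
  -- generators ℓ·cos θ and ℓ·sin θ
  set h1 : ℝ × ℝ → ℝ := fun p => p.2 * Real.cos p.1 with hh1
  set h2 : ℝ × ℝ → ℝ := fun p => p.2 * Real.sin p.1 with hh2
  have h1P : h1 ∈ P := Submodule.subset_span ⟨1, 1, Or.inr (by funext p; simp [hh1])⟩
  have h2P : h2 ∈ P := Submodule.subset_span ⟨1, 1, Or.inl (by funext p; simp [hh2])⟩
  have e1 : pb h1 fsin = fun p : ℝ × ℝ => Real.cos p.1 ^ 2 := by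
    funext p
    have d1 : pdEll h1 p = Real.cos p.1 := by
      simp only [pdEll, hh1]
      exact (hasDerivAt_mul_const (Real.cos p.1)).deriv
    have d2 : pdTheta h1 p = p.2 * (-Real.sin p.1) := by
      simp only [pdTheta, hh1]
      exact ((Real.hasDerivAt_cos p.1).const_mul p.2).deriv
    have d3 : pdTheta fsin p = Real.cos p.1 := by
      simp only [pdTheta, fsin]
      exact (Real.hasDerivAt_sin p.1).deriv
    have d4 : pdEll fsin p = 0 := by
      simp only [pdEll, fsin]; exact deriv_const _ _
    simp only [pb, d1, d2, d3, d4]; ring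
  have e2 : pb h2 fcos = fun p : ℝ × ℝ => -(Real.sin p.1 ^ 2) := by
    funext p
    have d1 : pdEll h2 p = Real.sin p.1 := by
      simp only [pdEll, hh2]
      exact (hasDerivAt_mul_const (Real.sin p.1)).deriv
    have d2 : pdTheta h2 p = p.2 * Real.cos p.1 := by
      simp only [pdTheta, hh2]
      exact ((Real.hasDerivAt_sin p.1).const_mul p.2).deriv
    have d3 : pdTheta fcos p = -Real.sin p.1 := by
      simp only [pdTheta, fcos]
      exact (Real.hasDerivAt_cos p.1).deriv
    have d4 : pdEll fcos p = 0 := by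
      simp only [pdEll, fcos]; exact deriv_const _ _
    simp only [pb, d1, d2, d3, d4]; ring
  have g2P : (fun p : ℝ × ℝ => Real.cos (2 * p.1)) ∈ P := by
    refine Submodule.subset_span ⟨0, 2, Or.inr ?_⟩
    funext p; push_cast; simp
  have m1 : pb h1 fsin ∈ P := by
    rw [e1]
    have : (fun p : ℝ × ℝ => Real.cos p.1 ^ 2)
        = (1/2 : ℝ) • fone + (1/2 : ℝ) • (fun p : ℝ × ℝ => Real.cos (2 * p.1)) := by
      funext p
      simp only [Pi.add_apply, Pi.smul_apply, smul_eq_mul, fone, Real.cos_sq]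
      ring
    rw [this]
    exact P.add_mem (P.smul_mem _ fone_mem_P) (P.smul_mem _ g2P)
  have m2 : pb h2 fcos ∈ P := by
    rw [e2]
    have : (fun p : ℝ × ℝ => -(Real.sin p.1 ^ 2))
        = (-(1/2) : ℝ) • fone + (1/2 : ℝ) • (fun p : ℝ × ℝ => Real.cos (2 * p.1)) := by
      funext p
      have := Real.sin_sq p.1
      have hc := Real.cos_sq p.1
      simp only [Pi.add_apply, Pi.smul_apply, smul_eq_mul, fone]
      nlinarith [Real.sin_sq p.1, Real.cos_sq p.1]
    rw [this]
    exact P.add_mem (P.smul_mem _ fone_mem_P) (P.smul_mem _ g2P)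
  have key : (⟨fone, fone_mem_P⟩ : P)
      = (⟨pb h1 fsin, m1⟩ : P) - ⟨pb h2 fcos, m2⟩ := by
    apply Subtype.ext
    show fone = pb h1 fsin - pb h2 fcos
    funext p
    simp only [Pi.sub_apply, e1, e2, fone]
    nlinarith [Real.sin_sq_add_cos_sq p.1]
  have z1 : Q ⟨pb h1 fsin, m1⟩ = 0 := hbr ⟨h1, h1P⟩ ⟨fsin, fsin_mem_P⟩ m1
  have z2 : Q ⟨pb h2 fcos, m2⟩ = 0 := hbr ⟨h2, h2P⟩ ⟨fcos, fcos_mem_P⟩ m2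
  rw [key, map_sub, z1, z2] at hone
  norm_num at hone

end
end

section
/- For every ν ∈ ℝ, there is no ℝ-linear map Q from C^∞(ℝ², ℝ) (with coordinates (θ, ℓ) and the Poisson bracket {f, g} = (∂f/∂ℓ)(∂g/∂θ) − (∂f/∂θ)(∂g/∂ℓ)) to linear operators D → D satisfying Q({f, g}) = i(Q(f)Q(g) − Q(g)Q(f)) for all smooth f, g, Q(1) = I, Q(f) symmetric for every smooth f, Q(ℓ)ψ = −iψ′ + νψ, Q(sin θ) = multiplication by sin θ, and Q(cos θ) = multiplication by cos θ. (No-go theorem for ℝ² with the exotic basic set span{1, ℓ, sin θ, cos θ}.) -/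
noncomputable section
/-- The Poisson algebra `C^∞(ℝ², ℝ)` of all smooth functions on the plane. -/
def SmoothFns : Submodule ℝ (ℝ × ℝ → ℝ) where
  carrier := {f | ContDiff ℝ (⊤ : ℕ∞) f}
  add_mem' := by
    intro a b ha hb
    simp only [Set.mem_setOf_eq] at *
    exact ha.add hb
  zero_mem' := by
    simp only [Set.mem_setOf_eq]
    exact contDiff_const
  smul_mem' := by
    intro c f hf
    simp only [Set.mem_setOf_eq] at *
    exact hf.const_smul c

/-- No-go theorem for `ℝ²` with the exotic basic set `span{1, ℓ, sin θ, cos θ}`: there is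
no admissible quantization of type (i)′ of all of `C^∞(ℝ²,ℝ)`, for any `ν`. -/
theorem stmt5 (ν : ℝ) :
    ¬ ∃ Q : SmoothFns →ₗ[ℝ] (Dom →ₗ[ℂ] Dom), IsQuant SmoothFns ν Q := by
  rintro ⟨Q, hQ⟩
  -- the angle coordinate function θ
  set ftheta : ℝ × ℝ → ℝ := fun p => p.1 with hfth
  have hth_mem : ftheta ∈ SmoothFns := by
    show ContDiff ℝ (⊤ : ℕ∞) ftheta
    exact contDiff_fst
  have hell_mem : fell ∈ SmoothFns := by
    show ContDiff ℝ (⊤ : ℕ∞) fell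
    exact contDiff_snd
  have hone_mem : fone ∈ SmoothFns := by
    show ContDiff ℝ (⊤ : ℕ∞) fone
    exact contDiff_const
  -- {θ, ℓ} = -1
  have hpb : pb ftheta fell = -fone := by
    funext p
    simp [pb, pdTheta, pdEll, hfth, fell, fone]
  have hpb_mem : pb ftheta fell ∈ SmoothFns := by
    rw [hpb]; exact (SmoothFns.neg_mem hone_mem)
  set A := Q ⟨ftheta, hth_mem⟩ with hA
  set B := Q ⟨fell, hell_mem⟩ with hB
  -- the bracket relation gives  -id = i•(AB - BA)
  have key : (-(LinearMap.id) : Dom →ₗ[ℂ] Dom)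
      = Complex.I • (A ∘ₗ B - B ∘ₗ A) := by
    have h1 : (⟨pb ftheta fell, hpb_mem⟩ : SmoothFns)
        = -(⟨fone, hone_mem⟩ : SmoothFns) := by
      apply Subtype.ext; simpa using hpb
    have := hQ.map_bracket ⟨ftheta, hth_mem⟩ ⟨fell, hell_mem⟩ hpb_mem
    rw [h1, map_neg, hQ.map_one hone_mem] at this
    exact this.symm ▸ this
  -- the constant function 1 on the circle
  set ψ0 : Dom := ⟨fun _ => (1 : ℂ), contDiff_const, fun _ => rfl⟩ with hψ0
  -- B ψ0 = ν • ψ0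
  have hBψ0 : B ψ0 = (ν : ℂ) • ψ0 := by
    apply Subtype.ext
    funext t
    have := hQ.map_ell hell_mem ψ0 t
    rw [hB]
    rw [this]
    have hder : deriv (ψ0 : ℝ → ℂ) t = 0 := by
      have : (ψ0 : ℝ → ℂ) = fun _ => (1 : ℂ) := rfl
      rw [this, deriv_const]
    rw [hder]
    simp [hψ0]
  set w : Dom := A ψ0 with hw
  -- continuity of elements of Dom
  have hcont : ∀ x : Dom, Continuous (x : ℝ → ℂ) := fun x => x.2.1.continuous
  -- pointwise value of the RHS applied to ψ0
  have hRHSval : ∀ t, ((Complex.I • (A ∘ₗ B - B ∘ₗ A)) ψ0 : ℝ → ℂ) t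
      = Complex.I * ((ν : ℂ) * (w : ℝ → ℂ) t - (B w : ℝ → ℂ) t) := by
    intro t
    have hABψ0 : A (B ψ0) = (ν : ℂ) • w := by
      rw [hBψ0, map_smul, hw]
    simp [LinearMap.smul_apply, LinearMap.sub_apply, LinearMap.comp_apply, hABψ0,
      Submodule.coe_smul, Submodule.coe_sub, Pi.sub_apply, Pi.smul_apply, smul_eq_mul]
    rfl
  -- integral identity from symmetry of B
  have hsymB : ip ((B ψ0 : Dom) : ℝ → ℂ) (w : ℝ → ℂ)
      = ip ((ψ0 : Dom) : ℝ → ℂ) ((B w : Dom) : ℝ → ℂ) := hQ.symm ⟨fell, hell_mem⟩ ψ0 w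
  have hψ0coe : ((ψ0 : Dom) : ℝ → ℂ) = fun _ => (1 : ℂ) := rfl
  have hip1 : ∀ v : ℝ → ℂ, ip ((ψ0 : Dom) : ℝ → ℂ) v
      = ∫ t in (0:ℝ)..(2*Real.pi), v t := by
    intro v
    unfold ip
    rw [hψ0coe]
    simp
  have hBw_int : (∫ t in (0:ℝ)..(2*Real.pi), (B w : ℝ → ℂ) t)
      = (ν : ℂ) * ∫ t in (0:ℝ)..(2*Real.pi), (w : ℝ → ℂ) t := by
    rw [← hip1]
    rw [← hsymB, hBψ0]
    unfold ip
    have : ∀ t, (starRingEnd ℂ) ((((ν : ℂ) • ψ0 : Dom) : ℝ → ℂ) t) * (w : ℝ → ℂ) t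
        = (ν : ℂ) * (w : ℝ → ℂ) t := by
      intro t
      have : ((((ν : ℂ) • ψ0 : Dom) : ℝ → ℂ) t) = (ν : ℂ) := by
        simp [hψ0]
      rw [this, Complex.conj_ofReal]
    rw [intervalIntegral.integral_congr (fun t _ => this t)]
    rw [intervalIntegral.integral_const_mul]
  -- evaluate the key identity under ip against ψ0
  have heval : ip ((ψ0 : Dom) : ℝ → ℂ) (((-(LinearMap.id) : Dom →ₗ[ℂ] Dom) ψ0 : Dom) : ℝ → ℂ)
      = ip ((ψ0 : Dom) : ℝ → ℂ) (((Complex.I • (A ∘ₗ B - B ∘ₗ A)) ψ0 : Dom) : ℝ → ℂ) := by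
    rw [key]
  -- LHS = -2π
  have hL : ip ((ψ0 : Dom) : ℝ → ℂ) (((-(LinearMap.id) : Dom →ₗ[ℂ] Dom) ψ0 : Dom) : ℝ → ℂ)
      = -(2 * Real.pi : ℝ) := by
    rw [hip1]
    have : ∀ t, (((-(LinearMap.id) : Dom →ₗ[ℂ] Dom) ψ0 : Dom) : ℝ → ℂ) t = -1 := by
      intro t
      simp [hψ0]
    rw [intervalIntegral.integral_congr (fun t _ => this t)]
    simp
  -- RHS = 0
  have hR : ip ((ψ0 : Dom) : ℝ → ℂ) (((Complex.I • (A ∘ₗ B - B ∘ₗ A)) ψ0 : Dom) : ℝ → ℂ)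
      = 0 := by
    rw [hip1]
    rw [intervalIntegral.integral_congr (fun t _ => hRHSval t)]
    rw [intervalIntegral.integral_const_mul]
    have hsplit : (∫ t in (0:ℝ)..(2*Real.pi),
        ((ν : ℂ) * (w : ℝ → ℂ) t - (B w : ℝ → ℂ) t))
        = (∫ t in (0:ℝ)..(2*Real.pi), (ν : ℂ) * (w : ℝ → ℂ) t)
          - ∫ t in (0:ℝ)..(2*Real.pi), (B w : ℝ → ℂ) t := by
      apply intervalIntegral.integral_sub
      · exact ((continuous_const.mul (hcont w)).intervalIntegrable _ _)
      · exact ((hcont (B w)).intervalIntegrable _ _)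
    rw [hsplit, intervalIntegral.integral_const_mul, hBw_int]
    ring
  rw [hL, hR] at heval
  have hpi : (0:ℝ) < 2 * Real.pi := by positivity
  have : (2 * Real.pi : ℝ) = 0 := by
    have := heval
    field_simp at this
    exact_mod_cast neg_eq_zero.mp this
  linarith
end
end

section
/- For every ν, η ∈ ℝ, the map Q_{ν,η} defined on P¹ by Q_{ν,η}(f(θ)ℓ + g(θ))ψ = −i f ψ′ + ((η − i/2) f′ + ν f + g) ψ (for f, g real trigonometric polynomials and ψ ∈ D) is a well-defined ℝ-linear map into linear operators D → D satisfying: Q_{ν,η}({F, G}) = i(Q_{ν,η}(F)Q_{ν,η}(G) − Q_{ν,η}(G)Q_{ν,η}(F)) for all F, G ∈ P¹; Q_{ν,η}(1) = I; Q_{ν,η}(F) is symmetric for every F ∈ P¹; Q_{ν,η}(ℓ)ψ = −iψ′ + νψ; Q_{ν,η}(sin θ) is multiplication by sin θ; and Q_{ν,η}(cos θ) is multiplication by cos θ. -/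
noncomputable section
/-- Spanning set of real trigonometric polynomials. -/
def TrigGens : Set (ℝ → ℝ) :=
  {h | ∃ m : ℕ, h = (fun t => Real.sin (m * t)) ∨ h = fun t => Real.cos (m * t)}

/-- Real trigonometric polynomials. -/
def Trig : Submodule ℝ (ℝ → ℝ) := Submodule.span ℝ TrigGens

/-- Spanning set for `P¹`, the elements of `P` of degree at most 1 in `ℓ`. -/
def P1Gens : Set (ℝ × ℝ → ℝ) :=
  {h | ∃ r m : ℕ, r ≤ 1 ∧
        (h = (fun p : ℝ × ℝ => p.2 ^ r * Real.sin (m * p.1)) ∨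
         h = (fun p : ℝ × ℝ => p.2 ^ r * Real.cos (m * p.1)))}

/-- `P¹ ⊆ P`: polynomials affine in the momentum `ℓ`. -/
def P1 : Submodule ℝ (ℝ × ℝ → ℝ) := Submodule.span ℝ P1Gens

lemma fone_mem_P1 : fone ∈ P1 :=
  Submodule.subset_span ⟨0, 0, Nat.zero_le 1, Or.inr (by funext p; simp [fone])⟩
lemma fell_mem_P1 : fell ∈ P1 :=
  Submodule.subset_span ⟨1, 0, le_refl 1, Or.inr (by funext p; simp [fell])⟩
lemma fsin_mem_P1 : fsin ∈ P1 :=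
  Submodule.subset_span ⟨0, 1, Nat.zero_le 1, Or.inl (by funext p; simp [fsin])⟩
lemma fcos_mem_P1 : fcos ∈ P1 :=
  Submodule.subset_span ⟨0, 1, Nat.zero_le 1, Or.inr (by funext p; simp [fcos])⟩
end
noncomputable section
namespace Stmt6Aux
open Complex Function

/-- coefficient of ℓ -/
def coF (F : ℝ × ℝ → ℝ) : ℝ → ℝ := fun t => F (t, 1) - F (t, 0)
/-- constant coefficient -/
def coG (F : ℝ × ℝ → ℝ) : ℝ → ℝ := fun t => F (t, 0)

def Cond (f : ℝ → ℝ) : Prop := ContDiff ℝ (⊤ : ℕ∞) f ∧ Function.Periodic f (2 * Real.pi)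

def Nice (F : ℝ × ℝ → ℝ) : Prop :=
  Cond (coF F) ∧ Cond (coG F) ∧ ∀ p : ℝ × ℝ, F p = coF F p.1 * p.2 + coG F p.1

lemma cdderiv {E : Type*} [NormedAddCommGroup E] [NormedSpace ℝ E] {f : ℝ → E}
    (h : ContDiff ℝ (⊤ : ℕ∞) f) : ContDiff ℝ (⊤ : ℕ∞) (deriv f) := by
  exact (contDiff_infty_iff_deriv.mp h).2

lemma periodic_deriv {E : Type*} [NormedAddCommGroup E] [NormedSpace ℝ E] {f : ℝ → E}
    {c : ℝ} (h : Function.Periodic f c) : Function.Periodic (deriv f) c := by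
  intro t
  have h2 : (fun x => f (x + c)) = f := funext h
  rw [← deriv_comp_add_const, h2]

lemma Cond.deriv {f : ℝ → ℝ} (hf : Cond f) : Cond (_root_.deriv f) :=
  ⟨cdderiv hf.1, periodic_deriv hf.2⟩

lemma Cond.diffAt {f : ℝ → ℝ} (hf : Cond f) (t : ℝ) : DifferentiableAt ℝ f t :=
  hf.1.differentiable (by simp) t

lemma Cond.zero : Cond (fun _ : ℝ => (0:ℝ)) := ⟨contDiff_const, fun _ => rfl⟩

lemma Cond.sinm (m : ℕ) : Cond (fun t => Real.sin (m * t)) := by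
  refine ⟨Real.contDiff_sin.comp (contDiff_const.mul contDiff_id), fun t => ?_⟩
  have h : (m:ℝ) * (t + 2 * Real.pi) = m * t + (m:ℤ) * (2 * Real.pi) := by push_cast; ring
  simp only [h, Real.sin_add_int_mul_two_pi]

lemma Cond.cosm (m : ℕ) : Cond (fun t => Real.cos (m * t)) := by
  refine ⟨Real.contDiff_cos.comp (contDiff_const.mul contDiff_id), fun t => ?_⟩
  have h : (m:ℝ) * (t + 2 * Real.pi) = m * t + (m:ℤ) * (2 * Real.pi) := by push_cast; ring
  simp only [h, Real.cos_add_int_mul_two_pi]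

lemma Cond.add {f g : ℝ → ℝ} (hf : Cond f) (hg : Cond g) : Cond (f + g) :=
  ⟨hf.1.add hg.1, hf.2.add hg.2⟩

lemma Cond.smul {f : ℝ → ℝ} (c : ℝ) (hf : Cond f) : Cond (c • f) :=
  ⟨hf.1.const_smul c, fun t => by simp [hf.2 t]⟩

lemma coF_add (F G : ℝ × ℝ → ℝ) : coF (F + G) = coF F + coF G := by
  funext t; simp [coF]; ring
lemma coG_add (F G : ℝ × ℝ → ℝ) : coG (F + G) = coG F + coG G := by
  funext t; simp [coG]
lemma coF_smul (c : ℝ) (F : ℝ × ℝ → ℝ) : coF (c • F) = c • coF F := by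
  funext t; simp [coF]; ring
lemma coG_smul (c : ℝ) (F : ℝ × ℝ → ℝ) : coG (c • F) = c • coG F := by
  funext t; simp [coG]

lemma Nice.add {F G : ℝ × ℝ → ℝ} (hF : Nice F) (hG : Nice G) : Nice (F + G) := by
  refine ⟨by rw [coF_add]; exact hF.1.add hG.1, by rw [coG_add]; exact hF.2.1.add hG.2.1,
    fun p => ?_⟩
  simp only [coF_add, coG_add, Pi.add_apply]
  rw [hF.2.2 p, hG.2.2 p]; ring

lemma Nice.smul {F : ℝ × ℝ → ℝ} (c : ℝ) (hF : Nice F) : Nice (c • F) := by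
  refine ⟨by rw [coF_smul]; exact hF.1.smul c, by rw [coG_smul]; exact hF.2.1.smul c,
    fun p => ?_⟩
  simp only [coF_smul, coG_smul, Pi.smul_apply, smul_eq_mul]
  rw [hF.2.2 p]; ring

lemma Nice.zero : Nice (0 : ℝ × ℝ → ℝ) := by
  refine ⟨⟨?_, fun _ => rfl⟩, ⟨?_, fun _ => rfl⟩, fun p => by simp [coF, coG]⟩
  · show ContDiff ℝ (⊤ : ℕ∞) (coF 0)
    have : coF (0 : ℝ × ℝ → ℝ) = fun _ => 0 := funext fun t => by simp [coF]
    rw [this]; exact contDiff_const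
  · show ContDiff ℝ (⊤ : ℕ∞) (coG 0)
    have : coG (0 : ℝ × ℝ → ℝ) = fun _ => 0 := funext fun t => by simp [coG]
    rw [this]; exact contDiff_const

lemma Cond.congr {f g : ℝ → ℝ} (h : f = g) (hg : Cond g) : Cond f := h ▸ hg

lemma nice_of_mem_P1 {F : ℝ × ℝ → ℝ} (hF : F ∈ P1) : Nice F := by
  induction hF using Submodule.span_induction with
  | mem x hx =>
    obtain ⟨r, m, hr, hx | hx⟩ := hx <;> subst hx <;> interval_cases r
    · exact ⟨Cond.congr (funext fun t => by simp [coF]) Cond.zero,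
        Cond.congr (funext fun t => by simp [coG]) (Cond.sinm m),
        fun p => by simp [coF, coG]⟩
    · exact ⟨Cond.congr (funext fun t => by simp [coF]) (Cond.sinm m),
        Cond.congr (funext fun t => by simp [coG]) Cond.zero,
        fun p => by simp [coF, coG]; ring⟩
    · exact ⟨Cond.congr (funext fun t => by simp [coF]) Cond.zero,
        Cond.congr (funext fun t => by simp [coG]) (Cond.cosm m),
        fun p => by simp [coF, coG]⟩
    · exact ⟨Cond.congr (funext fun t => by simp [coF]) (Cond.cosm m),
        Cond.congr (funext fun t => by simp [coG]) Cond.zero,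
        fun p => by simp [coF, coG]; ring⟩
  | zero => exact Nice.zero
  | add x y _ _ hx hy => exact hx.add hy
  | smul c x _ hx => exact hx.smul c

end Stmt6Aux

namespace Stmt6Aux
open Complex Function

lemma mem_Dom_iff {ψ : ℝ → ℂ} :
    ψ ∈ Dom ↔ ContDiff ℝ (⊤ : ℕ∞) ψ ∧ ∀ t, ψ (t + 2 * Real.pi) = ψ t := Iff.rfl

/-- the operator formula -/
def Afun (ν η : ℝ) (f g : ℝ → ℝ) (ψ : ℝ → ℂ) : ℝ → ℂ := fun t =>
  -I * (f t : ℂ) * deriv ψ t +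
    (((η : ℂ) - I / 2) * Complex.ofReal (deriv f t) + (ν : ℂ) * (f t : ℂ) + (g t : ℂ)) * ψ t

lemma cond_ofReal {f : ℝ → ℝ} (hf : Cond f) : ContDiff ℝ (⊤ : ℕ∞) (fun t => (f t : ℂ)) :=
  Complex.ofRealCLM.contDiff.comp hf.1

lemma afun_mem {ν η : ℝ} {f g : ℝ → ℝ} (hf : Cond f) (hg : Cond g) {ψ : ℝ → ℂ}
    (hψ : ψ ∈ Dom) : Afun ν η f g ψ ∈ Dom := by
  rw [mem_Dom_iff] at hψ ⊢
  constructor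
  · exact ((contDiff_const.mul (cond_ofReal hf)).mul (cdderiv hψ.1)).add
      ((((contDiff_const.mul (cond_ofReal hf.deriv)).add
        (contDiff_const.mul (cond_ofReal hf))).add (cond_ofReal hg)).mul hψ.1)
  · intro t
    simp only [Afun, hf.2 t, hg.2 t, hψ.2 t, hf.deriv.2 t, periodic_deriv hψ.2 t]

/-- the operator on Dom -/
def Op (ν η : ℝ) (f g : ℝ → ℝ) (hf : Cond f) (hg : Cond g) : Dom →ₗ[ℂ] Dom where
  toFun ψ := ⟨Afun ν η f g (ψ : ℝ → ℂ), afun_mem hf hg ψ.2⟩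
  map_add' ψ φ := Subtype.ext (funext fun t => by
    have hψ : DifferentiableAt ℝ (ψ : ℝ → ℂ) t := ψ.2.1.differentiable (by simp) t
    have hφ : DifferentiableAt ℝ (φ : ℝ → ℂ) t := φ.2.1.differentiable (by simp) t
    have hda : deriv ((ψ : ℝ → ℂ) + (φ : ℝ → ℂ)) t
        = deriv (ψ : ℝ → ℂ) t + deriv (φ : ℝ → ℂ) t := deriv_fun_add hψ hφ
    simp only [Afun, Submodule.coe_add, Pi.add_apply, hda]
    ring)
  map_smul' c ψ := Subtype.ext (funext fun t => by
    have hψ : DifferentiableAt ℝ (ψ : ℝ → ℂ) t := ψ.2.1.differentiable (by simp) t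
    have hda : deriv (c • (ψ : ℝ → ℂ)) t = c • deriv (ψ : ℝ → ℂ) t := deriv_const_smul c hψ
    simp only [Afun, RingHom.id_apply, SetLike.val_smul, Pi.smul_apply, smul_eq_mul, hda]
    ring)

lemma Op_apply_coe {ν η : ℝ} {f g : ℝ → ℝ} (hf : Cond f) (hg : Cond g) (ψ : Dom) :
    ((Op ν η f g hf hg ψ : Dom) : ℝ → ℂ) = Afun ν η f g (ψ : ℝ → ℂ) := rfl

/-- the quantization map -/
def Qmap (ν η : ℝ) : P1 →ₗ[ℝ] (Dom →ₗ[ℂ] Dom) where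
  toFun F := Op ν η (coF F.1) (coG F.1) (nice_of_mem_P1 F.2).1 (nice_of_mem_P1 F.2).2.1
  map_add' F G := LinearMap.ext fun ψ => Subtype.ext (funext fun t => by
    have nF := nice_of_mem_P1 F.2
    have nG := nice_of_mem_P1 G.2
    have hcoe : ((F + G : P1) : ℝ × ℝ → ℝ) = (F : ℝ × ℝ → ℝ) + (G : ℝ × ℝ → ℝ) := rfl
    have hdF : DifferentiableAt ℝ (coF F.1) t := nF.1.diffAt t
    have hdG : DifferentiableAt ℝ (coF G.1) t := nG.1.diffAt t
    have hda : deriv (coF (F : ℝ × ℝ → ℝ) + coF (G : ℝ × ℝ → ℝ)) t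
        = deriv (coF (F : ℝ × ℝ → ℝ)) t + deriv (coF (G : ℝ × ℝ → ℝ)) t := deriv_add hdF hdG
    simp only [LinearMap.add_apply, Submodule.coe_add, Pi.add_apply, Op_apply_coe, hcoe,
      coF_add, coG_add, Afun, hda]
    push_cast
    ring)
  map_smul' c F := LinearMap.ext fun ψ => Subtype.ext (funext fun t => by
    have nF := nice_of_mem_P1 F.2
    have hcoe : ((c • F : P1) : ℝ × ℝ → ℝ) = c • (F : ℝ × ℝ → ℝ) := rfl
    have hdF : DifferentiableAt ℝ (coF F.1) t := nF.1.diffAt t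
    have hda : deriv (c • coF (F : ℝ × ℝ → ℝ)) t
        = c • deriv (coF (F : ℝ × ℝ → ℝ)) t := deriv_const_smul c hdF
    simp only [RingHom.id_apply, LinearMap.smul_apply, SetLike.val_smul, Pi.smul_apply,
      Op_apply_coe, hcoe, coF_smul, coG_smul, smul_eq_mul, Afun, hda, Complex.real_smul, SetLike.val_smul_of_tower]
    push_cast
    ring)

end Stmt6Aux

namespace Stmt6Aux
open Complex Function

lemma Cond.hasDerivC {f : ℝ → ℝ} (hf : Cond f) (t : ℝ) :
    HasDerivAt (fun s => (f s : ℂ)) (Complex.ofReal (_root_.deriv f t)) t :=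
  ((hf.diffAt t).hasDerivAt).ofReal_comp

lemma hasDerivAt_afun {ν η : ℝ} {f g : ℝ → ℝ} (hf : Cond f) (hg : Cond g) {ψ : ℝ → ℂ}
    (hψ : ψ ∈ Dom) (t : ℝ) :
    HasDerivAt (Afun ν η f g ψ)
      (-I * Complex.ofReal (deriv f t) * deriv ψ t + -I * (f t : ℂ) * deriv (deriv ψ) t +
        (((η : ℂ) - I / 2) * Complex.ofReal (deriv (deriv f) t) +
          (ν : ℂ) * Complex.ofReal (deriv f t) + Complex.ofReal (deriv g t)) * ψ t +
        (((η : ℂ) - I / 2) * Complex.ofReal (deriv f t) + (ν : ℂ) * (f t : ℂ) + (g t : ℂ)) *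
          deriv ψ t) t := by
  have hψc : ContDiff ℝ (⊤ : ℕ∞) ψ := hψ.1
  have hfc := hf.hasDerivC t
  have hf'c := Cond.hasDerivC (Cond.deriv hf) t
  have hgc := hg.hasDerivC t
  have hψd : HasDerivAt ψ (deriv ψ t) t := (hψc.differentiable (by simp) t).hasDerivAt
  have hψ'd : HasDerivAt (deriv ψ) (deriv (deriv ψ) t) t :=
    ((cdderiv hψc).differentiable (by simp) t).hasDerivAt
  have h1 := (hfc.const_mul (-I)).mul hψ'd
  have h2 := (((hf'c.const_mul ((η : ℂ) - I / 2)).add (hfc.const_mul (ν : ℂ))).add hgc).mul hψd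
  have h3 := h1.add h2
  have h3' : HasDerivAt (Afun ν η f g ψ) _ t := h3
  convert h3' using 1
  simp only [Pi.add_apply]
  ring

lemma pb_repr {F G : ℝ × ℝ → ℝ} (hF : Nice F) (hG : Nice G) (p : ℝ × ℝ) :
    pb F G p = (coF F p.1 * deriv (coF G) p.1 - deriv (coF F) p.1 * coF G p.1) * p.2 +
      (coF F p.1 * deriv (coG G) p.1 - deriv (coG F) p.1 * coF G p.1) := by
  have e1 : pdEll F p = coF F p.1 := by
    unfold pdEll
    have hrepr : (fun l => F (p.1, l)) = fun l => coF F p.1 * l + coG F p.1 :=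
      funext fun l => hF.2.2 (p.1, l)
    have hd : HasDerivAt (fun l : ℝ => coF F p.1 * l + coG F p.1) (coF F p.1) p.2 := by
      simpa using ((hasDerivAt_id p.2).const_mul (coF F p.1)).add_const (coG F p.1)
    rw [hrepr, hd.deriv]
  have e3 : pdEll G p = coF G p.1 := by
    unfold pdEll
    have hrepr : (fun l => G (p.1, l)) = fun l => coF G p.1 * l + coG G p.1 :=
      funext fun l => hG.2.2 (p.1, l)
    have hd : HasDerivAt (fun l : ℝ => coF G p.1 * l + coG G p.1) (coF G p.1) p.2 := by
      simpa using ((hasDerivAt_id p.2).const_mul (coF G p.1)).add_const (coG G p.1)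
    rw [hrepr, hd.deriv]
  have e2 : pdTheta F p = deriv (coF F) p.1 * p.2 + deriv (coG F) p.1 := by
    unfold pdTheta
    have hrepr : (fun t => F (t, p.2)) = fun t => coF F t * p.2 + coG F t :=
      funext fun t => hF.2.2 (t, p.2)
    rw [hrepr]
    exact ((((hF.1.diffAt p.1).hasDerivAt.mul_const p.2)).add
      (hF.2.1.diffAt p.1).hasDerivAt).deriv
  have e4 : pdTheta G p = deriv (coF G) p.1 * p.2 + deriv (coG G) p.1 := by
    unfold pdTheta
    have hrepr : (fun t => G (t, p.2)) = fun t => coF G t * p.2 + coG G t :=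
      funext fun t => hG.2.2 (t, p.2)
    rw [hrepr]
    exact ((((hG.1.diffAt p.1).hasDerivAt.mul_const p.2)).add
      (hG.2.1.diffAt p.1).hasDerivAt).deriv
  unfold pb
  rw [e1, e2, e3, e4]
  ring

lemma coF_pb {F G : ℝ × ℝ → ℝ} (hF : Nice F) (hG : Nice G) :
    coF (pb F G) = fun t => coF F t * deriv (coF G) t - deriv (coF F) t * coF G t := by
  funext t
  simp only [coF]
  rw [pb_repr hF hG (t, 1), pb_repr hF hG (t, 0)]
  simp only [coF]
  ring

lemma coG_pb {F G : ℝ × ℝ → ℝ} (hF : Nice F) (hG : Nice G) :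
    coG (pb F G) = fun t => coF F t * deriv (coG G) t - deriv (coG F) t * coF G t := by
  funext t
  simp only [coG]
  rw [pb_repr hF hG (t, 0)]
  simp only [coF, coG]
  ring

end Stmt6Aux

namespace Stmt6Aux
open Complex Function

lemma afun_continuous {ν η : ℝ} {f g : ℝ → ℝ} (hf : Cond f) (hg : Cond g) {ψ : ℝ → ℂ}
    (hψ : ψ ∈ Dom) : Continuous (Afun ν η f g ψ) :=
  (mem_Dom_iff.mp (afun_mem (ν := ν) (η := η) hf hg hψ)).1.continuous

lemma symm_op {ν η : ℝ} {f g : ℝ → ℝ} (hf : Cond f) (hg : Cond g) :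
    SymmetricOp (Op ν η f g hf hg) := by
  intro φ ψ
  set A : (ℝ → ℂ) → (ℝ → ℂ) := Afun ν η f g with hA
  have hφm := φ.2
  have hψm := ψ.2
  set φ' : ℝ → ℂ := (φ : ℝ → ℂ)
  set ψ' : ℝ → ℂ := (ψ : ℝ → ℂ)
  have hφc : Continuous φ' := hφm.1.continuous
  have hψc : Continuous ψ' := hψm.1.continuous
  have hAφc : Continuous (A φ') := afun_continuous hf hg hφm
  have hAψc : Continuous (A ψ') := afun_continuous hf hg hψm
  -- the boundary function
  set H : ℝ → ℂ := fun t => I * (f t : ℂ) * (starRingEnd ℂ) (φ' t) * ψ' t with hH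
  have hHd : ∀ t : ℝ, HasDerivAt H
      ((starRingEnd ℂ) (A φ' t) * ψ' t - (starRingEnd ℂ) (φ' t) * A ψ' t) t := by
    intro t
    have hfc := hf.hasDerivC t
    have hφd : HasDerivAt φ' (deriv φ' t) t := (hφm.1.differentiable (by simp) t).hasDerivAt
    have hψd : HasDerivAt ψ' (deriv ψ' t) t := (hψm.1.differentiable (by simp) t).hasDerivAt
    have hconj : HasDerivAt (fun s => (starRingEnd ℂ) (φ' s))
        ((starRingEnd ℂ) (deriv φ' t)) t := hφd.star
    have h0 := ((hfc.const_mul I).mul hconj).mul hψd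
    have h0' : HasDerivAt H _ t := h0
    convert h0' using 1
    simp only [hA, Afun, map_add, map_mul, map_sub, map_div₀, map_neg, Complex.conj_I,
      Complex.conj_ofReal, map_ofNat, Pi.mul_apply]
    ring
  have hcont : Continuous fun t => (starRingEnd ℂ) (A φ' t) * ψ' t -
      (starRingEnd ℂ) (φ' t) * A ψ' t :=
    ((Complex.continuous_conj.comp hAφc).mul hψc).sub
      ((Complex.continuous_conj.comp hφc).mul hAψc)
  have hint : ∫ t in (0:ℝ)..(2 * Real.pi),
      ((starRingEnd ℂ) (A φ' t) * ψ' t - (starRingEnd ℂ) (φ' t) * A ψ' t) =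
      H (2 * Real.pi) - H 0 :=
    intervalIntegral.integral_eq_sub_of_hasDerivAt (fun t _ => hHd t)
      (hcont.intervalIntegrable _ _)
  have hper : H (2 * Real.pi) - H 0 = 0 := by
    have e : H (2 * Real.pi) = H 0 := by
      simp only [hH]
      rw [show (2 * Real.pi : ℝ) = 0 + 2 * Real.pi by ring, hf.2 0, hφm.2 0, hψm.2 0]
    rw [e, sub_self]
  have hsplit : ∫ t in (0:ℝ)..(2 * Real.pi),
      ((starRingEnd ℂ) (A φ' t) * ψ' t - (starRingEnd ℂ) (φ' t) * A ψ' t) =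
      ip (A φ') ψ' - ip φ' (A ψ') := by
    rw [ip, ip]
    exact intervalIntegral.integral_sub
      (((Complex.continuous_conj.comp hAφc).mul hψc).intervalIntegrable _ _)
      (((Complex.continuous_conj.comp hφc).mul hAψc).intervalIntegrable _ _)
  have : ip (A φ') ψ' - ip φ' (A ψ') = 0 := by rw [← hsplit, hint, hper]
  exact sub_eq_zero.mp this

end Stmt6Aux

namespace Stmt6Aux
open Complex Function

lemma Qmap_apply_coe (ν η : ℝ) (F : P1) (ψ : Dom) :
    ((Qmap ν η F ψ : Dom) : ℝ → ℂ) = Afun ν η (coF F.1) (coG F.1) (ψ : ℝ → ℂ) := rfl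

end Stmt6Aux

/-- Existence of the position representations `Q_{ν,η}` on `P¹`: for each `ν, η ∈ ℝ`
there is a (necessarily well-defined and ℝ-linear) quantization of `P¹` of type (i)′
with parameter `ν` acting by
`Q(f(θ)ℓ + g(θ))ψ = −i f ψ′ + ((η − i/2) f′ + ν f + g) ψ`. -/
theorem stmt6 (ν η : ℝ) :
    ∃ Q : P1 →ₗ[ℝ] (Dom →ₗ[ℂ] Dom),
      (∀ (f g : ℝ → ℝ), f ∈ Trig → g ∈ Trig →
        ∀ (h : (fun p : ℝ × ℝ => f p.1 * p.2 + g p.1) ∈ P1) (ψ : Dom) (t : ℝ),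
          (Q ⟨fun p : ℝ × ℝ => f p.1 * p.2 + g p.1, h⟩ ψ : ℝ → ℂ) t =
            -Complex.I * (f t : ℂ) * deriv (ψ : ℝ → ℂ) t +
              (((η : ℂ) - Complex.I / 2) * (Complex.ofReal (deriv f t)) + (ν : ℂ) * (f t : ℂ) + (g t : ℂ)) *
                (ψ : ℝ → ℂ) t) ∧
      IsQuant P1 ν Q := by
  open Stmt6Aux in
  refine ⟨Stmt6Aux.Qmap ν η, ?_, ?_, ?_, ?_, ?_, ?_, ?_⟩
  · -- explicit formula
    intro f g _ _ h ψ t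
    have hcF : coF (fun p : ℝ × ℝ => f p.1 * p.2 + g p.1) = f := funext fun s => by
      simp [coF]
    have hcG : coG (fun p : ℝ × ℝ => f p.1 * p.2 + g p.1) = g := funext fun s => by
      simp [coG]
    rw [Qmap_apply_coe, hcF, hcG]
    rfl
  · -- map_bracket
    intro F G h
    have nF := nice_of_mem_P1 F.2
    have nG := nice_of_mem_P1 G.2
    apply LinearMap.ext; intro ψ
    refine Subtype.ext (funext fun t => ?_)
    have hψm := ψ.2
    simp only [Qmap_apply_coe, LinearMap.smul_apply, LinearMap.sub_apply, LinearMap.coe_comp,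
      Function.comp_apply, SetLike.val_smul, Pi.smul_apply, AddSubgroupClass.coe_sub,
      Pi.sub_apply, smul_eq_mul]
    rw [coF_pb nF nG, coG_pb nF nG]
    have hd1 := (hasDerivAt_afun (ν := ν) (η := η) nG.1 nG.2.1 ψ.2 t).deriv
    have hd2 := (hasDerivAt_afun (ν := ν) (η := η) nF.1 nF.2.1 ψ.2 t).deriv
    have hdF := (nF.1.diffAt t).hasDerivAt
    have hdG := (nG.1.diffAt t).hasDerivAt
    have hdF' := (nF.1.deriv.diffAt t).hasDerivAt
    have hdG' := (nG.1.deriv.diffAt t).hasDerivAt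
    have hdc : deriv (fun s => coF (F : ℝ × ℝ → ℝ) s * deriv (coF (G : ℝ × ℝ → ℝ)) s -
        deriv (coF (F : ℝ × ℝ → ℝ)) s * coF (G : ℝ × ℝ → ℝ) s) t =
        (deriv (coF (F : ℝ × ℝ → ℝ)) t * deriv (coF (G : ℝ × ℝ → ℝ)) t +
          coF (F : ℝ × ℝ → ℝ) t * deriv (deriv (coF (G : ℝ × ℝ → ℝ))) t) -
        (deriv (deriv (coF (F : ℝ × ℝ → ℝ))) t * coF (G : ℝ × ℝ → ℝ) t +
          deriv (coF (F : ℝ × ℝ → ℝ)) t * deriv (coF (G : ℝ × ℝ → ℝ)) t) :=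
      ((hdF.mul hdG').sub (hdF'.mul hdG)).deriv
    simp only [Afun]
    rw [hd1, hd2, hdc]
    push_cast
    linear_combination (-Complex.I * ((Complex.ofReal (coF (F : ℝ × ℝ → ℝ) t)) * (Complex.ofReal (deriv (coF (G : ℝ × ℝ → ℝ)) t)) -
        (Complex.ofReal (deriv (coF (F : ℝ × ℝ → ℝ)) t)) * (Complex.ofReal (coF (G : ℝ × ℝ → ℝ) t))) * deriv (ψ : ℝ → ℂ) t +
      (((η : ℂ) - Complex.I / 2) * ((Complex.ofReal (coF (F : ℝ × ℝ → ℝ) t)) * (Complex.ofReal (deriv (deriv (coF (G : ℝ × ℝ → ℝ))) t)) -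
          (Complex.ofReal (deriv (deriv (coF (F : ℝ × ℝ → ℝ))) t)) * (Complex.ofReal (coF (G : ℝ × ℝ → ℝ) t))) +
        (ν : ℂ) * ((Complex.ofReal (coF (F : ℝ × ℝ → ℝ) t)) * (Complex.ofReal (deriv (coF (G : ℝ × ℝ → ℝ)) t)) -
          (Complex.ofReal (deriv (coF (F : ℝ × ℝ → ℝ)) t)) * (Complex.ofReal (coF (G : ℝ × ℝ → ℝ) t))) +
        ((Complex.ofReal (coF (F : ℝ × ℝ → ℝ) t)) * (Complex.ofReal (deriv (coG (G : ℝ × ℝ → ℝ)) t)) -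
          (Complex.ofReal (deriv (coG (F : ℝ × ℝ → ℝ)) t)) * (Complex.ofReal (coF (G : ℝ × ℝ → ℝ) t)))) * (ψ : ℝ → ℂ) t) *
      Complex.I_sq
  · -- map_one
    intro h
    apply LinearMap.ext; intro ψ
    refine Subtype.ext (funext fun t => ?_)
    have hcF : coF fone = fun _ => (0 : ℝ) := funext fun s => by simp [coF, fone]
    have hcG : coG fone = fun _ => (1 : ℝ) := funext fun s => by simp [coG, fone]
    rw [Qmap_apply_coe, hcF, hcG]
    simp [Afun]
  · -- symm
    intro F
    exact symm_op (nice_of_mem_P1 F.2).1 (nice_of_mem_P1 F.2).2.1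
  · -- map_ell
    intro h ψ t
    have hcF : coF fell = fun _ => (1 : ℝ) := funext fun s => by simp [coF, fell]
    have hcG : coG fell = fun _ => (0 : ℝ) := funext fun s => by simp [coG, fell]
    rw [Qmap_apply_coe, hcF, hcG]
    simp [Afun]
  · -- map_sin
    intro h ψ t
    have hcF : coF fsin = fun _ => (0 : ℝ) := funext fun s => by simp [coF, fsin]
    rw [Qmap_apply_coe, hcF]
    simp [Afun, coG, fsin]
  · -- map_cos
    intro h ψ t
    have hcF : coF fcos = fun _ => (0 : ℝ) := funext fun s => by simp [coF, fcos]
    rw [Qmap_apply_coe, hcF]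
    simp [Afun, coG, fcos]

end
end

section
/- P¹ is a proper maximal Lie subalgebra of P under the Poisson bracket: P¹ is closed under the Poisson bracket, P¹ ≠ P, and every Lie subalgebra S of P with P¹ ⊊ S satisfies S = P. -/
noncomputable section
/-- Closure under the Poisson bracket. -/
def IsLieSub (S : Submodule ℝ (ℝ × ℝ → ℝ)) : Prop :=
  ∀ f g : ℝ × ℝ → ℝ, f ∈ S → g ∈ S → pb f g ∈ S


-- ===== auxiliary development =====
lemma trig_sin (m : ℕ) : (fun t => Real.sin (m * t)) ∈ Trig :=
  Submodule.subset_span ⟨m, Or.inl rfl⟩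
lemma trig_cos (m : ℕ) : (fun t => Real.cos (m * t)) ∈ Trig :=
  Submodule.subset_span ⟨m, Or.inr rfl⟩
lemma trig_one : (fun _ : ℝ => (1:ℝ)) ∈ Trig := by
  have := trig_cos 0
  simpa using this

lemma trig_smooth {t : ℝ → ℝ} (ht : t ∈ Trig) : ContDiff ℝ (⊤ : ℕ∞) t := by
  induction ht using Submodule.span_induction with
  | mem x hx =>
    obtain ⟨m, hx | hx⟩ := hx <;> subst hx
    · exact (Real.contDiff_sin).comp (contDiff_const.mul contDiff_id)
    · exact (Real.contDiff_cos).comp (contDiff_const.mul contDiff_id)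
  | zero => exact contDiff_const
  | add x y _ _ hx hy => exact hx.add hy
  | smul c x _ hx => exact contDiff_const.mul hx

lemma trig_diff {t : ℝ → ℝ} (ht : t ∈ Trig) : Differentiable ℝ t :=
  (trig_smooth ht).differentiable (by simp)

lemma trig_cont {t : ℝ → ℝ} (ht : t ∈ Trig) : Continuous t :=
  (trig_diff ht).continuous

lemma deriv_sin_mul (m : ℕ) :
    deriv (fun t => Real.sin (m * t)) = fun t => (m : ℝ) * Real.cos (m * t) := by
  funext x
  have : HasDerivAt (fun t : ℝ => Real.sin (m * t)) (Real.cos (m * x) * (m : ℝ)) x := by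
    have h1 : HasDerivAt (fun t : ℝ => (m : ℝ) * t) (m : ℝ) x := by
      simpa using (hasDerivAt_id x).const_mul (m : ℝ)
    exact (Real.hasDerivAt_sin ((m : ℝ) * x)).comp x h1
  rw [this.deriv]; ring

lemma deriv_cos_mul (m : ℕ) :
    deriv (fun t => Real.cos (m * t)) = fun t => -((m : ℝ) * Real.sin (m * t)) := by
  funext x
  have : HasDerivAt (fun t : ℝ => Real.cos (m * t)) (-Real.sin (m * x) * (m : ℝ)) x := by
    have h1 : HasDerivAt (fun t : ℝ => (m : ℝ) * t) (m : ℝ) x := by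
      simpa using (hasDerivAt_id x).const_mul (m : ℝ)
    exact (Real.hasDerivAt_cos ((m : ℝ) * x)).comp x h1
  rw [this.deriv]; ring

lemma trig_deriv {t : ℝ → ℝ} (ht : t ∈ Trig) : deriv t ∈ Trig := by
  induction ht using Submodule.span_induction with
  | mem x hx =>
    obtain ⟨m, hx | hx⟩ := hx <;> subst hx
    · rw [deriv_sin_mul]
      exact Submodule.smul_mem _ (m:ℝ) (trig_cos m)
    · rw [deriv_cos_mul]
      have := Submodule.smul_mem _ (-(m:ℝ)) (trig_sin m)
      convert this using 1
      funext x
      simp only [Pi.smul_apply, smul_eq_mul]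
      ring
  | zero =>
    have : deriv (0 : ℝ → ℝ) = 0 := by
      funext z
      simp only [Pi.zero_apply]
      exact deriv_const z 0
    rw [this]; exact Trig.zero_mem
  | add x y hx hy hx' hy' =>
    have : deriv (x + y) = deriv x + deriv y := by
      funext z
      exact deriv_add ((trig_diff hx) z) ((trig_diff hy) z)
    rw [this]; exact Trig.add_mem hx' hy'
  | smul c x hx hx' =>
    have : deriv (c • x) = c • deriv x := by
      funext z
      simp only [Pi.smul_apply, smul_eq_mul]
      exact deriv_const_mul_field c
    rw [this]; exact Trig.smul_mem c hx'

lemma trig_bounded {t : ℝ → ℝ} (ht : t ∈ Trig) : ∃ C, ∀ x, |t x| ≤ C := by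
  induction ht using Submodule.span_induction with
  | mem x hx =>
    refine ⟨1, fun z => ?_⟩
    obtain ⟨m, hx | hx⟩ := hx <;> subst hx
    · exact Real.abs_sin_le_one _
    · exact Real.abs_cos_le_one _
  | zero => exact ⟨0, fun z => by simp⟩
  | add x y _ _ hx hy =>
    obtain ⟨C1, h1⟩ := hx; obtain ⟨C2, h2⟩ := hy
    exact ⟨C1 + C2, fun z => (abs_add_le _ _).trans (add_le_add (h1 z) (h2 z))⟩
  | smul c x _ hx =>
    obtain ⟨C, h⟩ := hx
    refine ⟨|c| * C, fun z => ?_⟩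
    simp only [Pi.smul_apply, smul_eq_mul, abs_mul]
    exact mul_le_mul_of_nonneg_left (h z) (abs_nonneg c)

lemma trig_cos_int (z : ℤ) : (fun θ => Real.cos (z * θ)) ∈ Trig := by
  obtain ⟨n, h | h⟩ : ∃ n : ℕ, z = n ∨ z = -(n:ℤ) := ⟨z.natAbs, Int.natAbs_eq z⟩
  · convert trig_cos n using 2 with θ
    rw [h]; norm_cast
  · convert trig_cos n using 2 with θ
    rw [h]
    push_cast
    rw [show (-(n:ℝ)) * θ = -((n:ℝ) * θ) by ring, Real.cos_neg]

lemma trig_sin_int (z : ℤ) : (fun θ => Real.sin (z * θ)) ∈ Trig := by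
  obtain ⟨n, h | h⟩ : ∃ n : ℕ, z = n ∨ z = -(n:ℤ) := ⟨z.natAbs, Int.natAbs_eq z⟩
  · convert trig_sin n using 2 with θ
    rw [h]; norm_cast
  · have h2 := Submodule.smul_mem Trig (-1 : ℝ) (trig_sin n)
    convert h2 using 1
    funext θ
    simp only [Pi.smul_apply, smul_eq_mul]
    rw [h]
    push_cast
    rw [show (-(n:ℝ)) * θ = -((n:ℝ) * θ) by ring, Real.sin_neg]
    ring

private lemma sin_mul_sin (a b : ℝ) :
    Real.sin a * Real.sin b = (Real.cos (a - b) - Real.cos (a + b)) / 2 := by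
  rw [Real.cos_sub, Real.cos_add]; ring
private lemma cos_mul_cos (a b : ℝ) :
    Real.cos a * Real.cos b = (Real.cos (a - b) + Real.cos (a + b)) / 2 := by
  rw [Real.cos_sub, Real.cos_add]; ring
private lemma sin_mul_cos (a b : ℝ) :
    Real.sin a * Real.cos b = (Real.sin (a + b) + Real.sin (a - b)) / 2 := by
  rw [Real.sin_sub, Real.sin_add]; ring
private lemma cos_mul_sin (a b : ℝ) :
    Real.cos a * Real.sin b = (Real.sin (a + b) - Real.sin (a - b)) / 2 := by
  rw [Real.sin_sub, Real.sin_add]; ring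

lemma trig_mul_gen {g t : ℝ → ℝ} (hg : g ∈ TrigGens) (ht : t ∈ Trig) :
    (fun θ => g θ * t θ) ∈ Trig := by
  induction ht using Submodule.span_induction with
  | mem x hx =>
    obtain ⟨m, hg | hg⟩ := hg <;> obtain ⟨k, hx | hx⟩ := hx <;> subst hg <;> subst hx
    · -- sin * sin
      have h1 := Submodule.smul_mem Trig (1/2 : ℝ) (trig_cos_int ((m:ℤ) - k))
      have h2 := Submodule.smul_mem Trig (-(1/2) : ℝ) (trig_cos_int ((m:ℤ) + k))
      have := Trig.add_mem h1 h2
      convert this using 1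
      funext θ
      simp only [Pi.add_apply, Pi.smul_apply, smul_eq_mul]
      rw [sin_mul_sin]
      push_cast
      rw [show ((m:ℝ) - k) * θ = (m:ℝ)*θ - (k:ℝ)*θ by ring,
          show ((m:ℝ) + k) * θ = (m:ℝ)*θ + (k:ℝ)*θ by ring]
      ring
    · -- sin * cos
      have h1 := Submodule.smul_mem Trig (1/2 : ℝ) (trig_sin_int ((m:ℤ) + k))
      have h2 := Submodule.smul_mem Trig (1/2 : ℝ) (trig_sin_int ((m:ℤ) - k))
      have := Trig.add_mem h1 h2
      convert this using 1
      funext θ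
      simp only [Pi.add_apply, Pi.smul_apply, smul_eq_mul]
      rw [sin_mul_cos]
      push_cast
      rw [show ((m:ℝ) - k) * θ = (m:ℝ)*θ - (k:ℝ)*θ by ring,
          show ((m:ℝ) + k) * θ = (m:ℝ)*θ + (k:ℝ)*θ by ring]
      ring
    · -- cos * sin
      have h1 := Submodule.smul_mem Trig (1/2 : ℝ) (trig_sin_int ((m:ℤ) + k))
      have h2 := Submodule.smul_mem Trig (-(1/2) : ℝ) (trig_sin_int ((m:ℤ) - k))
      have := Trig.add_mem h1 h2
      convert this using 1
      funext θ
      simp only [Pi.add_apply, Pi.smul_apply, smul_eq_mul]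
      rw [cos_mul_sin]
      push_cast
      rw [show ((m:ℝ) - k) * θ = (m:ℝ)*θ - (k:ℝ)*θ by ring,
          show ((m:ℝ) + k) * θ = (m:ℝ)*θ + (k:ℝ)*θ by ring]
      ring
    · -- cos * cos
      have h1 := Submodule.smul_mem Trig (1/2 : ℝ) (trig_cos_int ((m:ℤ) - k))
      have h2 := Submodule.smul_mem Trig (1/2 : ℝ) (trig_cos_int ((m:ℤ) + k))
      have := Trig.add_mem h1 h2
      convert this using 1
      funext θ
      simp only [Pi.add_apply, Pi.smul_apply, smul_eq_mul]
      rw [cos_mul_cos]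
      push_cast
      rw [show ((m:ℝ) - k) * θ = (m:ℝ)*θ - (k:ℝ)*θ by ring,
          show ((m:ℝ) + k) * θ = (m:ℝ)*θ + (k:ℝ)*θ by ring]
      ring
  | zero =>
    have : (fun θ => g θ * (0:ℝ→ℝ) θ) = 0 := by funext θ; simp
    rw [this]; exact Trig.zero_mem
  | add x y _ _ hx hy =>
    have : (fun θ => g θ * (x + y) θ) = (fun θ => g θ * x θ) + fun θ => g θ * y θ := by
      funext θ; simp [Pi.add_apply]; ring
    rw [this]; exact Trig.add_mem hx hy
  | smul c x _ hx =>
    have : (fun θ => g θ * (c • x) θ) = c • fun θ => g θ * x θ := by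
      funext θ; simp [Pi.smul_apply, smul_eq_mul]; ring
    rw [this]; exact Trig.smul_mem c hx

lemma trig_mul {s t : ℝ → ℝ} (hs : s ∈ Trig) (ht : t ∈ Trig) :
    (fun θ => s θ * t θ) ∈ Trig := by
  induction hs using Submodule.span_induction with
  | mem x hx => exact trig_mul_gen hx ht
  | zero =>
    have : (fun θ => (0:ℝ→ℝ) θ * t θ) = 0 := by funext θ; simp
    rw [this]; exact Trig.zero_mem
  | add x y _ _ hx hy =>
    have : (fun θ => (x + y) θ * t θ) = (fun θ => x θ * t θ) + fun θ => y θ * t θ := by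
      funext θ; simp [Pi.add_apply]; ring
    rw [this]; exact Trig.add_mem hx hy
  | smul c x _ hx =>
    have : (fun θ => (c • x) θ * t θ) = c • fun θ => x θ * t θ := by
      funext θ; simp [Pi.smul_apply, smul_eq_mul]; ring
    rw [this]; exact Trig.smul_mem c hx

/-- monomial in ℓ times function of θ -/
def Phi (r : ℕ) (t : ℝ → ℝ) : ℝ × ℝ → ℝ := fun p => p.2 ^ r * t p.1

/-- general polynomial-in-ℓ form -/
def FF (n : ℕ) (a : ℕ → ℝ → ℝ) : ℝ × ℝ → ℝ :=
  fun p => ∑ r ∈ Finset.range (n + 1), p.2 ^ r * a r p.1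

lemma Phi_add (r : ℕ) (x y : ℝ → ℝ) : Phi r (x + y) = Phi r x + Phi r y := by
  funext p; simp [Phi]; ring
lemma Phi_smul (r : ℕ) (c : ℝ) (x : ℝ → ℝ) : Phi r (c • x) = c • Phi r x := by
  funext p; simp [Phi]; ring

lemma pdEll_FF (n : ℕ) (a : ℕ → ℝ → ℝ) :
    pdEll (FF n a) = fun p => ∑ r ∈ Finset.range (n + 1), (r : ℝ) * p.2 ^ (r - 1) * a r p.1 := by
  funext p
  have h : HasDerivAt (fun l => ∑ r ∈ Finset.range (n + 1), l ^ r * a r p.1)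
      (∑ r ∈ Finset.range (n + 1), (r : ℝ) * p.2 ^ (r - 1) * a r p.1) p.2 := by
    apply HasDerivAt.fun_sum
    intro i _
    simpa using (hasDerivAt_pow i p.2).mul_const (a i p.1)
  exact h.deriv

lemma pdTheta_FF (n : ℕ) (a : ℕ → ℝ → ℝ) (ha : ∀ r, Differentiable ℝ (a r)) :
    pdTheta (FF n a) = fun p => ∑ r ∈ Finset.range (n + 1), p.2 ^ r * deriv (a r) p.1 := by
  funext p
  have h : HasDerivAt (fun t => ∑ r ∈ Finset.range (n + 1), p.2 ^ r * a r t)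
      (∑ r ∈ Finset.range (n + 1), p.2 ^ r * deriv (a r) p.1) p.1 := by
    apply HasDerivAt.fun_sum
    intro i _
    exact ((ha i).differentiableAt.hasDerivAt).const_mul (p.2 ^ i)
  exact h.deriv

lemma pdEll_Phi (r : ℕ) (t : ℝ → ℝ) :
    pdEll (Phi r t) = fun p => (r : ℝ) * p.2 ^ (r - 1) * t p.1 := by
  funext p
  have h : HasDerivAt (fun l => l ^ r * t p.1) ((r : ℝ) * p.2 ^ (r - 1) * t p.1) p.2 := by
    simpa using (hasDerivAt_pow r p.2).mul_const (t p.1)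
  exact h.deriv

lemma pdTheta_Phi (r : ℕ) (t : ℝ → ℝ) (ht : Differentiable ℝ t) :
    pdTheta (Phi r t) = fun p => p.2 ^ r * deriv t p.1 := by
  funext p
  exact ((ht.differentiableAt.hasDerivAt).const_mul (p.2 ^ r)).deriv

lemma pdEll_fsin : pdEll fsin = fun _ => 0 := by
  funext p; exact deriv_const p.2 (Real.sin p.1)
lemma pdEll_fcos : pdEll fcos = fun _ => 0 := by
  funext p; exact deriv_const p.2 (Real.cos p.1)
lemma pdTheta_fsin : pdTheta fsin = fun p => Real.cos p.1 := by
  funext p; exact congrFun Real.deriv_sin p.1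
lemma pdTheta_fcos : pdTheta fcos = fun p => -Real.sin p.1 := by
  funext p; exact congrFun Real.deriv_cos' p.1

lemma pb_fsin (g : ℝ × ℝ → ℝ) : pb fsin g = fun p => -(Real.cos p.1 * pdEll g p) := by
  funext p
  simp only [pb]
  rw [show pdEll fsin p = 0 from congrFun pdEll_fsin p,
      show pdTheta fsin p = Real.cos p.1 from congrFun pdTheta_fsin p]
  ring

lemma pb_fcos (g : ℝ × ℝ → ℝ) : pb fcos g = fun p => Real.sin p.1 * pdEll g p := by
  funext p
  simp only [pb]
  rw [show pdEll fcos p = 0 from congrFun pdEll_fcos p,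
      show pdTheta fcos p = -Real.sin p.1 from congrFun pdTheta_fcos p]
  ring


-- ===== Section D : membership and representations =====

lemma Phi_mem_P1 {r : ℕ} (hr : r ≤ 1) {t : ℝ → ℝ} (ht : t ∈ Trig) : Phi r t ∈ P1 := by
  induction ht using Submodule.span_induction with
  | mem x hx =>
    obtain ⟨m, hx | hx⟩ := hx <;> subst hx
    · exact Submodule.subset_span ⟨r, m, hr, Or.inl rfl⟩
    · exact Submodule.subset_span ⟨r, m, hr, Or.inr rfl⟩
  | zero =>
    rw [show Phi r (0:ℝ→ℝ) = 0 by funext p; simp [Phi]]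
    exact P1.zero_mem
  | add x y _ _ hx hy => rw [Phi_add]; exact P1.add_mem hx hy
  | smul c x _ hx => rw [Phi_smul]; exact P1.smul_mem c hx

lemma FF_add (N : ℕ) (x y : ℕ → ℝ → ℝ) :
    FF N (fun r => x r + y r) = FF N x + FF N y := by
  funext p
  simp [FF, mul_add, Finset.sum_add_distrib]

lemma FF_pad {n N : ℕ} (hnN : n ≤ N) (a : ℕ → ℝ → ℝ) :
    FF N (fun r => if r ≤ n then a r else 0) = FF n a := by
  funext p
  show (∑ r ∈ Finset.range (N+1), p.2 ^ r * (if r ≤ n then a r else 0) p.1) = _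
  rw [← Finset.sum_subset (Finset.range_subset_range.mpr (by omega) :
      Finset.range (n+1) ⊆ Finset.range (N+1))]
  · apply Finset.sum_congr rfl
    intro i hi
    rw [if_pos (by simp at hi; omega)]
  · intro i _ hi
    rw [if_neg (by simp at hi ⊢; omega)]
    simp

lemma P_rep {h : ℝ × ℝ → ℝ} (hmem : h ∈ P) :
    ∃ n a, (∀ r, a r ∈ Trig) ∧ h = FF n a := by
  induction hmem using Submodule.span_induction with
  | mem x hx =>
    obtain ⟨r, m, hx⟩ := hx
    have key : ∀ t : ℝ → ℝ, t ∈ Trig →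
        (fun p : ℝ × ℝ => p.2 ^ r * t p.1) = FF r (fun i => if i = r then t else 0) := by
      intro t _
      funext p
      show _ = ∑ i ∈ Finset.range (r+1), p.2 ^ i * (if i = r then t else 0) p.1
      rw [Finset.sum_eq_single r]
      · simp
      · intro b _ hb; simp [hb]
      · intro hr; exact absurd (Finset.self_mem_range_succ r) hr
    rcases hx with hx | hx <;> subst hx
    · refine ⟨r, _, fun i => ?_, key _ (trig_sin m)⟩
      by_cases hi : i = r
      · rw [if_pos hi]; exact trig_sin m
      · rw [if_neg hi]; exact Trig.zero_mem
    · refine ⟨r, _, fun i => ?_, key _ (trig_cos m)⟩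
      by_cases hi : i = r
      · rw [if_pos hi]; exact trig_cos m
      · rw [if_neg hi]; exact Trig.zero_mem
  | zero =>
    refine ⟨0, fun _ => 0, fun _ => Trig.zero_mem, ?_⟩
    funext p; simp [FF]
  | add x y _ _ hx hy =>
    obtain ⟨n, a, ha, rfl⟩ := hx
    obtain ⟨m, b, hb, rfl⟩ := hy
    refine ⟨max n m, fun r => (if r ≤ n then a r else 0) + (if r ≤ m then b r else 0),
      fun r => ?_, ?_⟩
    · apply Trig.add_mem <;> [skip; skip] <;>
        first
        | (by_cases hr : r ≤ n
           · rw [if_pos hr]; exact ha r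
           · rw [if_neg hr]; exact Trig.zero_mem)
        | (by_cases hr : r ≤ m
           · rw [if_pos hr]; exact hb r
           · rw [if_neg hr]; exact Trig.zero_mem)
    · rw [FF_add, FF_pad (le_max_left n m), FF_pad (le_max_right n m)]
  | smul c x _ hx =>
    obtain ⟨n, a, ha, rfl⟩ := hx
    refine ⟨n, fun r => c • a r, fun r => Trig.smul_mem c (ha r), ?_⟩
    funext p
    show (c • FF n a) p = _
    simp only [Pi.smul_apply, smul_eq_mul, FF, Finset.mul_sum]
    apply Finset.sum_congr rfl
    intro i _
    ring

lemma P1_rep {h : ℝ × ℝ → ℝ} (hmem : h ∈ P1) :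
    ∃ f g, f ∈ Trig ∧ g ∈ Trig ∧ h = fun p => p.2 * f p.1 + g p.1 := by
  induction hmem using Submodule.span_induction with
  | mem x hx =>
    obtain ⟨r, m, hr, hx⟩ := hx
    interval_cases r
    · rcases hx with hx | hx <;> subst hx
      · exact ⟨0, _, Trig.zero_mem, trig_sin m, by funext p; simp⟩
      · exact ⟨0, _, Trig.zero_mem, trig_cos m, by funext p; simp⟩
    · rcases hx with hx | hx <;> subst hx
      · exact ⟨_, 0, trig_sin m, Trig.zero_mem, by funext p; simp⟩
      · exact ⟨_, 0, trig_cos m, Trig.zero_mem, by funext p; simp⟩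
  | zero => exact ⟨0, 0, Trig.zero_mem, Trig.zero_mem, by funext p; simp⟩
  | add x y _ _ hx hy =>
    obtain ⟨f, g, hf, hg, rfl⟩ := hx
    obtain ⟨F, G, hF, hG, rfl⟩ := hy
    refine ⟨f + F, g + G, Trig.add_mem hf hF, Trig.add_mem hg hG, ?_⟩
    funext p; simp [Pi.add_apply]; ring
  | smul c x _ hx =>
    obtain ⟨f, g, hf, hg, rfl⟩ := hx
    refine ⟨c • f, c • g, Trig.smul_mem c hf, Trig.smul_mem c hg, ?_⟩
    funext p; simp [Pi.smul_apply, smul_eq_mul]; ring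

lemma affine_mem_P1 {f g : ℝ → ℝ} (hf : f ∈ Trig) (hg : g ∈ Trig) :
    (fun p : ℝ × ℝ => p.2 * f p.1 + g p.1) ∈ P1 := by
  have h1 := Phi_mem_P1 (le_refl 1) hf
  have h0 := Phi_mem_P1 (Nat.zero_le 1) hg
  have := P1.add_mem h1 h0
  convert this using 1
  funext p; simp [Phi, Pi.add_apply]

lemma pdEll_affine (f g : ℝ → ℝ) :
    pdEll (fun p => p.2 * f p.1 + g p.1) = fun p => f p.1 := by
  funext p
  have h : HasDerivAt (fun l : ℝ => l * f p.1 + g p.1) (f p.1) p.2 := by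
    simpa using ((hasDerivAt_id p.2).mul_const (f p.1)).add_const (g p.1)
  exact h.deriv

lemma pdTheta_affine {f g : ℝ → ℝ} (hf : Differentiable ℝ f) (hg : Differentiable ℝ g) :
    pdTheta (fun p => p.2 * f p.1 + g p.1) =
      fun p => p.2 * deriv f p.1 + deriv g p.1 := by
  funext p
  have h : HasDerivAt (fun t : ℝ => p.2 * f t + g t)
      (p.2 * deriv f p.1 + deriv g p.1) p.1 :=
    ((hf.differentiableAt.hasDerivAt).const_mul p.2).add hg.differentiableAt.hasDerivAt
  exact h.deriv

lemma isLieSub_P1 : IsLieSub P1 := by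
  intro h1 h2 hm1 hm2
  obtain ⟨f, g, hf, hg, rfl⟩ := P1_rep hm1
  obtain ⟨F, G, hF, hG, rfl⟩ := P1_rep hm2
  have hc : (fun θ => f θ * deriv F θ - deriv f θ * F θ) ∈ Trig :=
    Submodule.sub_mem _ (trig_mul hf (trig_deriv hF)) (trig_mul (trig_deriv hf) hF)
  have hd : (fun θ => f θ * deriv G θ - deriv g θ * F θ) ∈ Trig :=
    Submodule.sub_mem _ (trig_mul hf (trig_deriv hG)) (trig_mul (trig_deriv hg) hF)
  have hmem := affine_mem_P1 hc hd
  convert hmem using 1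
  funext p
  simp only [pb]
  rw [show pdEll (fun p : ℝ × ℝ => p.2 * f p.1 + g p.1) p = f p.1 from
        congrFun (pdEll_affine f g) p,
      show pdEll (fun p : ℝ × ℝ => p.2 * F p.1 + G p.1) p = F p.1 from
        congrFun (pdEll_affine F G) p,
      show pdTheta (fun p : ℝ × ℝ => p.2 * f p.1 + g p.1) p
            = p.2 * deriv f p.1 + deriv g p.1 from
        congrFun (pdTheta_affine (trig_diff hf) (trig_diff hg)) p,
      show pdTheta (fun p : ℝ × ℝ => p.2 * F p.1 + G p.1) p
            = p.2 * deriv F p.1 + deriv G p.1 from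
        congrFun (pdTheta_affine (trig_diff hF) (trig_diff hG)) p]
  ring

lemma P1_ne_P : P1 ≠ P := by
  intro hEq
  set L : (ℝ × ℝ → ℝ) → ℝ := fun h => h (0, 2) - 2 * h (0, 1) + h (0, 0) with hL
  have hker : ∀ h ∈ P1, L h = 0 := by
    intro h hmem
    induction hmem using Submodule.span_induction with
    | mem x hx =>
      obtain ⟨r, m, hr, hx⟩ := hx
      interval_cases r <;> rcases hx with hx | hx <;> subst hx <;> simp [hL] <;> norm_num
    | zero => simp [hL]
    | add x y _ _ hx hy => simp only [hL, Pi.add_apply] at hx hy ⊢; linarith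
    | smul c x _ hx =>
      simp only [hL, Pi.smul_apply, smul_eq_mul] at hx ⊢
      linear_combination c * hx
  have hgen : (fun p : ℝ × ℝ => p.2 ^ 2 * Real.cos ((0:ℕ) * p.1)) ∈ P :=
    Submodule.subset_span ⟨2, 0, Or.inr rfl⟩
  rw [← hEq] at hgen
  have := hker _ hgen
  simp [hL] at this
  norm_num at this


-- ===== Section E : core machinery =====

lemma deriv_zero_fun : deriv (0 : ℝ → ℝ) = 0 := by
  funext z
  simp only [Pi.zero_apply]
  exact deriv_const z 0

lemma deriv_one_fun : deriv (fun _ : ℝ => (1:ℝ)) = 0 := by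
  funext z
  simp only [Pi.zero_apply]
  exact deriv_const z 1

lemma trig_deriv_add {a b : ℝ → ℝ} (ha : a ∈ Trig) (hb : b ∈ Trig) :
    deriv (a + b) = deriv a + deriv b := by
  funext z
  simp only [Pi.add_apply]
  exact deriv_add (trig_diff ha z) (trig_diff hb z)

lemma deriv_smul_fun (c : ℝ) (a : ℝ → ℝ) : deriv (c • a) = c • deriv a := by
  funext z
  simp only [Pi.smul_apply, smul_eq_mul]
  exact deriv_const_mul_field c

lemma Phi_sub (r : ℕ) (x y : ℝ → ℝ) : Phi r (x - y) = Phi r x - Phi r y := by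
  funext p; simp [Phi]; ring

lemma pb_Phi1_Phi2 {f b : ℝ → ℝ} (hf : Differentiable ℝ f) (hb : Differentiable ℝ b) :
    pb (Phi 1 f) (Phi 2 b)
      = Phi 2 (fun θ => f θ * deriv b θ - 2 * deriv f θ * b θ) := by
  funext p
  simp only [pb, Phi]
  rw [congrFun (pdEll_Phi 1 f) p, congrFun (pdTheta_Phi 1 f hf) p,
      congrFun (pdEll_Phi 2 b) p, congrFun (pdTheta_Phi 2 b hb) p]
  push_cast
  ring

lemma pb_Phi2_Phir {r : ℕ} (hr : 1 ≤ r) {t s : ℝ → ℝ}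
    (ht : Differentiable ℝ t) (hs : Differentiable ℝ s) :
    pb (Phi 2 t) (Phi r s)
      = Phi (r+1) (fun θ => 2 * t θ * deriv s θ - (r:ℝ) * deriv t θ * s θ) := by
  obtain ⟨k, rfl⟩ : ∃ k, r = k + 1 := ⟨r - 1, by omega⟩
  funext p
  simp only [pb, Phi]
  rw [congrFun (pdEll_Phi 2 t) p, congrFun (pdTheta_Phi 2 t ht) p,
      congrFun (pdEll_Phi (k+1) s) p, congrFun (pdTheta_Phi (k+1) s hs) p]
  have h1 : (2 : ℕ) - 1 = 1 := rfl
  have h2 : k + 1 - 1 = k := rfl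
  rw [h1, h2]
  push_cast
  ring

section Smax
variable {S : Submodule ℝ (ℝ × ℝ → ℝ)}

lemma B_Lam (hS : IsLieSub S) (hP1 : P1 ≤ S) {f b : ℝ → ℝ} (hf : f ∈ Trig) (hb : b ∈ Trig) (hbS : Phi 2 b ∈ S) :
    Phi 2 (fun θ => f θ * deriv b θ - 2 * deriv f θ * b θ) ∈ S := by
  rw [← pb_Phi1_Phi2 (trig_diff hf) (trig_diff hb)]
  exact hS _ _ (hP1 (Phi_mem_P1 le_rfl hf)) hbS

lemma B_deriv (hS : IsLieSub S) (hP1 : P1 ≤ S) {b : ℝ → ℝ} (hb : b ∈ Trig) (hbS : Phi 2 b ∈ S) :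
    Phi 2 (deriv b) ∈ S := by
  have := B_Lam hS hP1 trig_one hb hbS
  convert this using 2
  funext θ
  rw [congrFun deriv_one_fun θ]
  simp

end Smax

/-- iterated operator `(D² + N²)∘…∘(D² + 0²)` -/
def QQ : ℕ → (ℝ → ℝ) → (ℝ → ℝ)
  | 0, a => deriv (deriv a)
  | (N+1), a => deriv (deriv (QQ N a)) + (((N:ℝ)+1)^2) • QQ N a

lemma QQ_trig {a : ℝ → ℝ} (ha : a ∈ Trig) : ∀ N, QQ N a ∈ Trig := by
  intro N
  induction N with
  | zero => exact trig_deriv (trig_deriv ha)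
  | succ N ih =>
    exact Trig.add_mem (trig_deriv (trig_deriv ih)) (Trig.smul_mem _ ih)

lemma QQ_zero_fun (N : ℕ) : QQ N (0 : ℝ → ℝ) = 0 := by
  induction N with
  | zero => show deriv (deriv 0) = 0; rw [deriv_zero_fun, deriv_zero_fun]
  | succ N ih => show deriv (deriv (QQ N 0)) + _ • QQ N 0 = 0
                 rw [ih, deriv_zero_fun, deriv_zero_fun]; simp

lemma QQ_mono {a : ℝ → ℝ} {N : ℕ} (h : QQ N a = 0) : QQ (N+1) a = 0 := by
  show deriv (deriv (QQ N a)) + _ • QQ N a = 0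
  rw [h, deriv_zero_fun, deriv_zero_fun]; simp

lemma QQ_le {a : ℝ → ℝ} {N M : ℕ} (hNM : N ≤ M) (h : QQ N a = 0) : QQ M a = 0 := by
  induction hNM with
  | refl => exact h
  | step _ ih => exact QQ_mono (by exact ih)

lemma QQ_add {a b : ℝ → ℝ} (ha : a ∈ Trig) (hb : b ∈ Trig) (N : ℕ) :
    QQ N (a + b) = QQ N a + QQ N b := by
  induction N with
  | zero =>
    show deriv (deriv (a+b)) = deriv (deriv a) + deriv (deriv b)
    rw [trig_deriv_add ha hb, trig_deriv_add (trig_deriv ha) (trig_deriv hb)]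
  | succ N ih =>
    show deriv (deriv (QQ N (a+b))) + _ • QQ N (a+b) = _
    rw [ih, trig_deriv_add (QQ_trig ha N) (QQ_trig hb N),
        trig_deriv_add (trig_deriv (QQ_trig ha N)) (trig_deriv (QQ_trig hb N)),
        smul_add]
    show _ = deriv (deriv (QQ N a)) + _ • QQ N a + (deriv (deriv (QQ N b)) + _ • QQ N b)
    abel

lemma QQ_smul (c : ℝ) (a : ℝ → ℝ) (N : ℕ) : QQ N (c • a) = c • QQ N a := by
  induction N with
  | zero =>
    show deriv (deriv (c • a)) = c • deriv (deriv a)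
    rw [deriv_smul_fun, deriv_smul_fun]
  | succ N ih =>
    show deriv (deriv (QQ N (c • a))) + _ • QQ N (c • a) = _
    rw [ih, deriv_smul_fun, deriv_smul_fun, smul_comm _ c, ← smul_add]
    rfl

lemma QQ_pure {m : ℕ} {a : ℝ → ℝ}
    (hd : deriv (deriv a) = (-((m:ℝ)^2)) • a) (N : ℕ) :
    QQ N a = (∏ j ∈ Finset.range (N+1), ((j:ℝ)^2 - (m:ℝ)^2)) • a := by
  induction N with
  | zero =>
    show deriv (deriv a) = _
    rw [hd]
    congr 1
    simp
  | succ N ih =>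
    show deriv (deriv (QQ N a)) + _ • QQ N a = _
    rw [ih, deriv_smul_fun, deriv_smul_fun, hd]
    funext θ
    simp only [Pi.add_apply, Pi.smul_apply, smul_eq_mul, Finset.prod_range_succ]
    push_cast
    ring

lemma gen_dd_sin (m : ℕ) :
    deriv (deriv (fun θ => Real.sin (m*θ))) = (-((m:ℝ)^2)) • (fun θ => Real.sin (m*θ)) := by
  rw [deriv_sin_mul]
  funext θ
  have : deriv (fun t => (m:ℝ) * Real.cos (m*t)) θ
      = (m:ℝ) * deriv (fun t => Real.cos (m*t)) θ := deriv_const_mul_field _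
  rw [this, congrFun (deriv_cos_mul m) θ]
  simp only [Pi.smul_apply, smul_eq_mul]
  ring

lemma gen_dd_cos (m : ℕ) :
    deriv (deriv (fun θ => Real.cos (m*θ))) = (-((m:ℝ)^2)) • (fun θ => Real.cos (m*θ)) := by
  rw [deriv_cos_mul]
  funext θ
  have h1 : deriv (fun t => -((m:ℝ) * Real.sin (m*t))) θ
      = deriv (fun t => (-(m:ℝ)) * Real.sin (m*t)) θ := by
    congr 1
    funext t
    ring
  have h2 : deriv (fun t => (-(m:ℝ)) * Real.sin (m*t)) θ
      = (-(m:ℝ)) * deriv (fun t => Real.sin (m*t)) θ := deriv_const_mul_field _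
  rw [h1, h2, congrFun (deriv_sin_mul m) θ]
  simp only [Pi.smul_apply, smul_eq_mul]
  ring

lemma FBexists {a : ℝ → ℝ} (ha : a ∈ Trig) : ∃ N, QQ N a = 0 := by
  induction ha using Submodule.span_induction with
  | mem x hx =>
    obtain ⟨m, hx | hx⟩ := hx <;> subst hx <;> refine ⟨m, ?_⟩
    · rw [QQ_pure (gen_dd_sin m) m,
          Finset.prod_eq_zero (Finset.self_mem_range_succ m) (by ring), zero_smul]
    · rw [QQ_pure (gen_dd_cos m) m,
          Finset.prod_eq_zero (Finset.self_mem_range_succ m) (by ring), zero_smul]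
  | zero => exact ⟨0, QQ_zero_fun 0⟩
  | add x y hx hy hx' hy' =>
    obtain ⟨N, hN⟩ := hx'
    obtain ⟨M, hM⟩ := hy'
    refine ⟨max N M, ?_⟩
    rw [QQ_add hx hy, QQ_le (le_max_left N M) hN, QQ_le (le_max_right N M) hM, add_zero]
  | smul c x hx hx' =>
    obtain ⟨N, hN⟩ := hx'
    exact ⟨N, by rw [QQ_smul, hN, smul_zero]⟩

lemma trig_const_of_dd_zero {a : ℝ → ℝ} (ha : a ∈ Trig)
    (h : deriv (deriv a) = 0) : ∀ x, a x = a 0 := by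
  have hda : ∀ x, deriv a x = deriv a 0 := by
    intro x
    exact is_const_of_deriv_eq_zero (trig_diff (trig_deriv ha)) (fun z => congrFun h z) x 0
  set c := deriv a 0 with hc
  have key : ∀ x, a x = a 0 + c * x := by
    intro x
    have hg : Differentiable ℝ (fun x => a x - c * x) :=
      (trig_diff ha).sub (differentiable_id.const_mul c)
    have hg' : ∀ z, deriv (fun x => a x - c * x) z = 0 := by
      intro z
      have hder : HasDerivAt (fun x => a x - c * x) (deriv a z - c) z :=
        ((trig_diff ha z).hasDerivAt).sub (by simpa using (hasDerivAt_id z).const_mul c)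
      rw [hder.deriv, hda z, sub_self]
    have := is_const_of_deriv_eq_zero hg hg' x 0
    simp only [mul_zero, sub_zero] at this
    linarith [this]
  have hc0 : c = 0 := by
    by_contra hne
    obtain ⟨C, hC⟩ := trig_bounded ha
    have hC0 : 0 ≤ C := le_trans (abs_nonneg _) (hC 0)
    set x := (2*C + 1)/|c| * (if c > 0 then 1 else -1) with hx
    have : |a x - a 0| = |c * x| := by rw [key x]; ring_nf
    have h1 : |c * x| = 2*C+1 := by
      rw [hx, abs_mul]
      rcases lt_or_gt_of_ne hne with hneg | hpos
      · rw [if_neg (by linarith)]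
        rw [abs_mul]
        simp [abs_of_pos, abs_div]
        rw [abs_of_pos (by linarith : (0:ℝ) < 2*C+1)]
        field_simp
      · rw [if_pos hpos]
        rw [abs_mul]
        simp
        rw [abs_of_pos (by positivity : (0:ℝ) < (2*C+1)/|c|)]
        field_simp
    have h2 : |a x - a 0| ≤ 2*C := by
      calc |a x - a 0| ≤ |a x| + |a 0| := abs_sub _ _
        _ ≤ C + C := add_le_add (hC x) (hC 0)
        _ = 2*C := by ring
    rw [this, h1] at h2
    linarith
  intro x
  rw [key x, hc0]
  ring


-- ===== Section E2 : generating the constant at level 2 =====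

lemma B_QQmem {S : Submodule ℝ (ℝ × ℝ → ℝ)} (hS : IsLieSub S) (hP1 : P1 ≤ S)
    {b : ℝ → ℝ} (hb : b ∈ Trig) (hbS : Phi 2 b ∈ S) (N : ℕ) : Phi 2 (QQ N b) ∈ S := by
  induction N with
  | zero =>
    exact B_deriv hS hP1 (trig_deriv hb) (B_deriv hS hP1 hb hbS)
  | succ N ih =>
    show Phi 2 (deriv (deriv (QQ N b)) + _ • QQ N b) ∈ S
    rw [Phi_add, Phi_smul]
    exact S.add_mem
      (B_deriv hS hP1 (trig_deriv (QQ_trig hb N))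
        (B_deriv hS hP1 (QQ_trig hb N) ih))
      (S.smul_mem _ ih)

lemma one_in {S : Submodule ℝ (ℝ × ℝ → ℝ)} (hS : IsLieSub S) (hP1 : P1 ≤ S) :
    ∀ N : ℕ, ∀ a : ℝ → ℝ, a ∈ Trig → Phi 2 a ∈ S → a ≠ 0 → QQ N a = 0 →
      Phi 2 (fun _ => (1:ℝ)) ∈ S := by
  intro N
  induction N with
  | zero =>
    intro a ha haS hane h0
    have hconst : ∀ x, a x = a 0 := trig_const_of_dd_zero ha h0
    have ha0 : a 0 ≠ 0 := by
      intro h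
      apply hane
      funext x
      rw [hconst x, h, Pi.zero_apply]
    have hmem := S.smul_mem (a 0)⁻¹ haS
    rw [← Phi_smul] at hmem
    convert hmem using 2
    funext x
    simp only [Pi.smul_apply, smul_eq_mul]
    rw [hconst x, inv_mul_cancel₀ ha0]
  | succ N ih =>
    intro a ha haS hane h0
    by_cases hp0 : QQ N a = 0
    · exact ih a ha haS hane hp0
    · set pf := QQ N a with hpf
      have hp_trig : pf ∈ Trig := QQ_trig ha N
      have hpS : Phi 2 pf ∈ S := B_QQmem hS hP1 ha haS N
      set k : ℝ := (N:ℝ) + 1 with hk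
      have hkpos : (0:ℝ) < k := by positivity
      have hdd : deriv (deriv pf) = (-(k^2)) • pf := by
        have : deriv (deriv pf) + k^2 • pf = 0 := h0
        funext θ
        have := congrFun this θ
        simp only [Pi.add_apply, Pi.smul_apply, smul_eq_mul, Pi.zero_apply] at this
        simp only [Pi.smul_apply, smul_eq_mul]
        linarith
      set q : ℝ → ℝ := k⁻¹ • deriv pf with hq
      have hq_trig : q ∈ Trig := Trig.smul_mem _ (trig_deriv hp_trig)
      have hqS : Phi 2 q ∈ S := by
        rw [hq, Phi_smul]
        exact S.smul_mem _ (B_deriv hS hP1 hp_trig hpS)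
      have hdp : ∀ θ, deriv pf θ = k * q θ := by
        intro θ
        rw [hq]
        simp only [Pi.smul_apply, smul_eq_mul]
        field_simp
      have hdq : ∀ θ, deriv q θ = -k * pf θ := by
        intro θ
        rw [hq, deriv_smul_fun]
        have := congrFun hdd θ
        simp only [Pi.smul_apply, smul_eq_mul] at this ⊢
        rw [this]
        field_simp
      -- the two bracket elements
      have hu : Phi 2 (fun θ => q θ * deriv pf θ - 2 * deriv q θ * pf θ) ∈ S :=
        B_Lam hS hP1 hq_trig hp_trig hpS
      have hv : Phi 2 (fun θ => pf θ * deriv q θ - 2 * deriv pf θ * q θ) ∈ S :=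
        B_Lam hS hP1 hp_trig hq_trig hqS
      -- p² + q² is a positive constant
      have hwconst : ∀ θ, pf θ^2 + q θ^2 = pf 0^2 + q 0^2 := by
        have hwdiff : Differentiable ℝ (fun θ => pf θ^2 + q θ^2) :=
          ((trig_diff hp_trig).pow 2).add ((trig_diff hq_trig).pow 2)
        have hwz : ∀ θ, deriv (fun θ => pf θ^2 + q θ^2) θ = 0 := by
          intro θ
          have hder : HasDerivAt (fun θ => pf θ^2 + q θ^2)
              ((2:ℕ) * pf θ^(2-1) * deriv pf θ + (2:ℕ) * q θ^(2-1) * deriv q θ) θ :=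
            (((trig_diff hp_trig θ).hasDerivAt).pow 2).add
              (((trig_diff hq_trig θ).hasDerivAt).pow 2)
          rw [hder.deriv, hdp θ, hdq θ]
          push_cast
          ring
        intro θ
        exact is_const_of_deriv_eq_zero hwdiff hwz θ 0
      obtain ⟨θ₀, hθ₀⟩ := Function.ne_iff.mp hp0
      rw [Pi.zero_apply] at hθ₀
      have hwpos : 0 < pf 0^2 + q 0^2 := by
        have := hwconst θ₀
        nlinarith [sq_nonneg (q θ₀), sq_nonneg (pf θ₀), sq_abs (pf θ₀),
          abs_pos.mpr hθ₀]
      set w0 : ℝ := pf 0^2 + q 0^2 with hw0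
      -- u - v = 3k w0 constant
      have hsub : Phi 2 ((fun θ => q θ * deriv pf θ - 2 * deriv q θ * pf θ)
          - fun θ => pf θ * deriv q θ - 2 * deriv pf θ * q θ) ∈ S := by
        rw [Phi_sub]
        exact S.sub_mem hu hv
      have hconstfun : ((fun θ => q θ * deriv pf θ - 2 * deriv q θ * pf θ)
          - fun θ => pf θ * deriv q θ - 2 * deriv pf θ * q θ)
          = fun _ => 3 * k * w0 := by
        funext θ
        simp only [Pi.sub_apply]
        rw [hdp θ, hdq θ, hw0]
        linear_combination (3*k) * (hwconst θ)
      rw [hconstfun] at hsub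
      have hne : (3 * k * w0) ≠ 0 := by positivity
      have hmem := S.smul_mem (3 * k * w0)⁻¹ hsub
      rw [← Phi_smul] at hmem
      convert hmem using 2
      funext x
      simp only [Pi.smul_apply, smul_eq_mul]
      rw [inv_mul_cancel₀ hne]

lemma trig_sin_one : Real.sin ∈ Trig := by
  have := trig_sin 1
  convert this using 2 with θ
  norm_num

lemma trig_cos_one : Real.cos ∈ Trig := by
  have := trig_cos 1
  convert this using 2 with θ
  norm_num

lemma B_all {S : Submodule ℝ (ℝ × ℝ → ℝ)} (hS : IsLieSub S) (hP1 : P1 ≤ S)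
    {a : ℝ → ℝ} (ha : a ∈ Trig) (hane : a ≠ 0) (haS : Phi 2 a ∈ S) :
    ∀ t ∈ Trig, Phi 2 t ∈ S := by
  obtain ⟨N, hN⟩ := FBexists ha
  have hone : Phi 2 (fun _ => (1:ℝ)) ∈ S := one_in hS hP1 N a ha haS hane hN
  intro t ht
  induction ht using Submodule.span_induction with
  | mem x hx =>
    obtain ⟨m, hx | hx⟩ := hx <;> subst hx
    · -- sin (m θ)
      rcases Nat.eq_zero_or_pos m with hm | hm
    
      · subst hm
        have : (fun t : ℝ => Real.sin ((0:ℕ) * t)) = (0 : ℝ → ℝ) := by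
          funext θ; simp
        rw [this, show Phi 2 (0:ℝ→ℝ) = 0 by funext p; simp [Phi]]
        exact S.zero_mem
      · have hlam := B_Lam hS hP1 (trig_cos m) trig_one hone
        have hEq : (fun θ => (fun t => Real.cos (m*t)) θ * deriv (fun _ : ℝ => (1:ℝ)) θ
              - 2 * deriv (fun t => Real.cos (m*t)) θ * (fun _ : ℝ => (1:ℝ)) θ)
            = fun θ => 2 * m * Real.sin (m * θ) := by
          funext θ
          rw [congrFun deriv_one_fun θ, congrFun (deriv_cos_mul m) θ]
          simp only [Pi.zero_apply]
          ring
        rw [hEq] at hlam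
        have hmem := S.smul_mem (2 * (m:ℝ))⁻¹ hlam
        rw [← Phi_smul] at hmem
        convert hmem using 2
        funext θ
        have hmne : (2 * (m:ℝ)) ≠ 0 := by positivity
        simp only [Pi.smul_apply, smul_eq_mul]
        field_simp
    · -- cos (m θ)
      rcases Nat.eq_zero_or_pos m with hm | hm
      · subst hm
        have : (fun t : ℝ => Real.cos ((0:ℕ) * t)) = fun _ : ℝ => (1:ℝ) := by
          funext θ; simp
        rw [this]
        exact hone
      · have hlam := B_Lam hS hP1 (trig_sin m) trig_one hone
        have hEq : (fun θ => (fun t => Real.sin (m*t)) θ * deriv (fun _ : ℝ => (1:ℝ)) θ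
              - 2 * deriv (fun t => Real.sin (m*t)) θ * (fun _ : ℝ => (1:ℝ)) θ)
            = fun θ => -(2 * m) * Real.cos (m * θ) := by
          funext θ
          rw [congrFun deriv_one_fun θ, congrFun (deriv_sin_mul m) θ]
          simp only [Pi.zero_apply]
          ring
        rw [hEq] at hlam
        have hmem := S.smul_mem (-(2 * (m:ℝ)))⁻¹ hlam
        rw [← Phi_smul] at hmem
        convert hmem using 2
        funext θ
        have hmne : (2 * (m:ℝ)) ≠ 0 := by positivity
        simp only [Pi.smul_apply, smul_eq_mul]
        rw [show (-(2 * (m:ℝ)))⁻¹ * (-(2 * (m:ℝ)) * Real.cos (m * θ))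
            = ((-(2 * (m:ℝ)))⁻¹ * (-(2 * (m:ℝ)))) * Real.cos (m * θ) by ring,
          inv_mul_cancel₀ (by simpa using hmne)]
        ring
  | zero =>
    rw [show Phi 2 (0:ℝ→ℝ) = 0 by funext p; simp [Phi]]
    exact S.zero_mem
  | add x y _ _ hx hy =>
    rw [Phi_add]; exact S.add_mem hx hy
  | smul c x _ hx =>
    rw [Phi_smul]; exact S.smul_mem c hx


-- ===== Section E3 : upward induction =====

lemma trig_const_mul (c : ℝ) {a : ℝ → ℝ} (ha : a ∈ Trig) :
    (fun θ => c * a θ) ∈ Trig := by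
  have := Trig.smul_mem c ha
  convert this using 1
  rfl

lemma up {S : Submodule ℝ (ℝ × ℝ → ℝ)} (hS : IsLieSub S) (hP1 : P1 ≤ S)
    (h2 : ∀ t ∈ Trig, Phi 2 t ∈ S) :
    ∀ r, 2 ≤ r → ∀ t ∈ Trig, Phi r t ∈ S := by
  intro r hr
  induction r, hr using Nat.le_induction with
  | base => exact h2
  | succ r hr ih =>
    have hD : ∀ s ∈ Trig, Phi (r+1) (deriv s) ∈ S := by
      intro s hs
      have hpb : pb (Phi 2 (fun _ => (1:ℝ))) (Phi r s) ∈ S :=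
        hS _ _ (h2 _ trig_one) (ih _ hs)
      rw [pb_Phi2_Phir (by omega) (differentiable_const 1) (trig_diff hs)] at hpb
      have hEq : (fun θ => 2 * (fun _:ℝ => (1:ℝ)) θ * deriv s θ
            - (r:ℝ) * deriv (fun _:ℝ => (1:ℝ)) θ * s θ) = (2:ℝ) • deriv s := by
        funext θ
        rw [congrFun deriv_one_fun θ]
        simp only [Pi.smul_apply, smul_eq_mul, Pi.zero_apply]
        ring
      rw [hEq, Phi_smul] at hpb
      have h' := S.smul_mem (2⁻¹:ℝ) hpb
      rw [smul_smul] at h'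
      norm_num at h'
      exact h'
    have hmS : ∀ m : ℕ, 1 ≤ m →
        Phi (r+1) (fun θ => Real.sin ((m:ℝ)*θ)) ∈ S
        ∧ Phi (r+1) (fun θ => Real.cos ((m:ℝ)*θ)) ∈ S := by
      intro m hm1
      have hmne : ((m:ℝ)) ≠ 0 := by positivity
      constructor
      · have hd := hD _ (trig_cos m)
        rw [deriv_cos_mul] at hd
        have h' := S.smul_mem (-((m:ℝ)⁻¹)) hd
        rw [← Phi_smul] at h'
        convert h' using 2
        funext θ
        simp only [Pi.smul_apply, smul_eq_mul]
        field_simp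
      · have hd := hD _ (trig_sin m)
        rw [deriv_sin_mul] at hd
        have h' := S.smul_mem ((m:ℝ)⁻¹) hd
        rw [← Phi_smul] at h'
        convert h' using 2
        funext θ
        simp only [Pi.smul_apply, smul_eq_mul]
        field_simp
    have hsc : Phi (r+1) (fun θ => 2 * Real.sin θ * deriv Real.cos θ
        - (r:ℝ) * deriv Real.sin θ * Real.cos θ) ∈ S := by
      have hpb : pb (Phi 2 Real.sin) (Phi r Real.cos) ∈ S :=
        hS _ _ (h2 _ trig_sin_one) (ih _ trig_cos_one)
      rw [pb_Phi2_Phir (by omega) Real.differentiable_sin Real.differentiable_cos] at hpb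
      exact hpb
    have hsc2 : Phi (r+1) (fun θ => -(2 * Real.sin θ^2) - (r:ℝ) * Real.cos θ^2) ∈ S := by
      convert hsc using 2
      funext θ
      rw [congrFun Real.deriv_cos' θ, congrFun Real.deriv_sin θ]
      ring
    have hone : Phi (r+1) (fun _ => (1:ℝ)) ∈ S := by
      have hcos2 : Phi (r+1) (fun θ => Real.cos (((2:ℕ):ℝ)*θ)) ∈ S := (hmS 2 (by norm_num)).2
      have hr2 : ((r:ℝ)+2) ≠ 0 := by positivity
      set A : ℝ → ℝ := fun θ : ℝ => -(2 * Real.sin θ^2) - (r:ℝ) * Real.cos θ^2 with hA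
      set Bf : ℝ → ℝ := fun θ : ℝ => Real.cos (((2:ℕ):ℝ)*θ) with hBf
      have key : (fun _ : ℝ => (1:ℝ))
          = (-2/((r:ℝ)+2)) • A + (-((r:ℝ)-2)/((r:ℝ)+2)) • Bf := by
        funext θ
        have h1 : Real.cos (((2:ℕ):ℝ)*θ) = 2 * Real.cos θ^2 - 1 := by
          push_cast
          exact Real.cos_two_mul θ
        have h2 : Real.sin θ^2 = 1 - Real.cos θ^2 := Real.sin_sq θ
        simp only [Pi.add_apply, Pi.smul_apply, smul_eq_mul, hA, hBf]
        rw [h1, h2]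
        field_simp
        ring
      rw [key, Phi_add, Phi_smul, Phi_smul]
      exact S.add_mem (S.smul_mem _ hsc2) (S.smul_mem _ hcos2)
    intro t ht
    induction ht using Submodule.span_induction with
    | mem x hx =>
      obtain ⟨m, hx | hx⟩ := hx <;> subst hx
      · rcases Nat.eq_zero_or_pos m with hm | hm
        · subst hm
          have : (fun t : ℝ => Real.sin (((0:ℕ):ℝ) * t)) = (0 : ℝ → ℝ) := by
            funext θ; simp
          rw [this, show Phi (r+1) (0:ℝ→ℝ) = 0 by funext p; simp [Phi]]
          exact S.zero_mem
        · exact (hmS m hm).1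
      · rcases Nat.eq_zero_or_pos m with hm | hm
        · subst hm
          have : (fun t : ℝ => Real.cos (((0:ℕ):ℝ) * t)) = fun _ : ℝ => (1:ℝ) := by
            funext θ; simp
          rw [this]
          exact hone
        · exact (hmS m hm).2
    | zero =>
      rw [show Phi (r+1) (0:ℝ→ℝ) = 0 by funext p; simp [Phi]]
      exact S.zero_mem
    | add x y _ _ hx hy => rw [Phi_add]; exact S.add_mem hx hy
    | smul c x _ hx => rw [Phi_smul]; exact S.smul_mem c hx


-- ===== Section E4 : reduction to degree 2 and final assembly =====

lemma trig_neg {a : ℝ → ℝ} (ha : a ∈ Trig) : (fun θ => -(a θ)) ∈ Trig := by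
  have := trig_const_mul (-1) ha
  convert this using 1
  funext θ
  ring

lemma pb_fcos_FF (n : ℕ) (a : ℕ → ℝ → ℝ) :
    pb fcos (FF (n+1) a)
      = FF n (fun i => fun θ => Real.sin θ * ((((i:ℕ):ℝ)+1) * a (i+1) θ)) := by
  funext p
  rw [congrFun (pb_fcos (FF (n+1) a)) p, congrFun (pdEll_FF (n+1) a) p]
  show Real.sin p.1 * (∑ r ∈ Finset.range (n+1+1), (r:ℝ) * p.2^(r-1) * a r p.1)
      = ∑ i ∈ Finset.range (n+1), p.2^i * (Real.sin p.1 * ((((i:ℕ):ℝ)+1) * a (i+1) p.1))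
  rw [Finset.sum_range_succ' (fun r => (r:ℝ) * p.2^(r-1) * a r p.1) (n+1)]
  simp only [Nat.cast_zero, zero_mul, add_zero]
  rw [Finset.mul_sum]
  apply Finset.sum_congr rfl
  intro i _
  have hidx : i + 1 - 1 = i := rfl
  rw [hidx]
  push_cast
  ring

lemma pb_fsin_FF (n : ℕ) (a : ℕ → ℝ → ℝ) :
    pb fsin (FF (n+1) a)
      = FF n (fun i => fun θ => -(Real.cos θ * ((((i:ℕ):ℝ)+1) * a (i+1) θ))) := by
  funext p
  rw [congrFun (pb_fsin (FF (n+1) a)) p, congrFun (pdEll_FF (n+1) a) p]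
  show -(Real.cos p.1 * (∑ r ∈ Finset.range (n+1+1), (r:ℝ) * p.2^(r-1) * a r p.1))
      = ∑ i ∈ Finset.range (n+1), p.2^i * (-(Real.cos p.1 * ((((i:ℕ):ℝ)+1) * a (i+1) p.1)))
  rw [Finset.sum_range_succ' (fun r => (r:ℝ) * p.2^(r-1) * a r p.1) (n+1)]
  simp only [Nat.cast_zero, zero_mul, add_zero]
  rw [← neg_mul, Finset.mul_sum]
  apply Finset.sum_congr rfl
  intro i _
  have hidx : i + 1 - 1 = i := rfl
  rw [hidx]
  push_cast
  ring

lemma reduce {S : Submodule ℝ (ℝ × ℝ → ℝ)} (hS : IsLieSub S) (hP1 : P1 ≤ S) :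
    ∀ n (a : ℕ → ℝ → ℝ), (∀ r, a r ∈ Trig) → FF n a ∈ S →
      (∃ r, 2 ≤ r ∧ r ≤ n ∧ a r ≠ 0) →
      ∃ b, b ∈ Trig ∧ b ≠ 0 ∧ Phi 2 b ∈ S := by
  intro n
  induction n with
  | zero => rintro a _ _ ⟨r, hr2, hrn, _⟩; omega
  | succ n ih =>
    rintro a ha hmem ⟨r0, hr02, hr0n, hr0ne⟩
    by_cases hhigh : ∃ r, 3 ≤ r ∧ r ≤ n+1 ∧ a r ≠ 0
    · obtain ⟨r1, hr13, hr1n, hr1ne⟩ := hhigh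
      obtain ⟨θ₀, hθ₀⟩ := Function.ne_iff.mp hr1ne
      rw [Pi.zero_apply] at hθ₀
      have hidx : r1 - 1 + 1 = r1 := by omega
      have hcoef : ((((r1-1:ℕ):ℝ))+1) ≠ 0 := by positivity
      by_cases hsin : Real.sin θ₀ = 0
      · -- cos θ₀ ≠ 0 : use `fsin`
        have hcos : Real.cos θ₀ ≠ 0 := by
          intro h
          have h5 := Real.sin_sq_add_cos_sq θ₀
          rw [hsin, h] at h5
          norm_num at h5
        have hbt : ∀ i, (fun θ => -(Real.cos θ * ((((i:ℕ):ℝ)+1) * a (i+1) θ))) ∈ Trig :=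
          fun i => trig_neg (trig_mul trig_cos_one (trig_const_mul _ (ha (i+1))))
        have hFS : FF n (fun i => fun θ => -(Real.cos θ * ((((i:ℕ):ℝ)+1) * a (i+1) θ))) ∈ S := by
          rw [← pb_fsin_FF]
          exact hS _ _ (hP1 fsin_mem_P1) hmem
        refine ih _ hbt hFS ⟨r1 - 1, by omega, by omega, ?_⟩
        intro h0
        have hval := congrFun h0 θ₀
        simp only [Pi.zero_apply] at hval
        rw [hidx] at hval
        have h2 := neg_eq_zero.mp hval
        rcases mul_eq_zero.mp h2 with h3 | h3
        · exact hcos h3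
        · rcases mul_eq_zero.mp h3 with h4 | h4
          · exact hcoef h4
          · exact hθ₀ h4
      · -- sin θ₀ ≠ 0 : use `fcos`
        have hbt : ∀ i, (fun θ => Real.sin θ * ((((i:ℕ):ℝ)+1) * a (i+1) θ)) ∈ Trig :=
          fun i => trig_mul trig_sin_one (trig_const_mul _ (ha (i+1)))
        have hFS : FF n (fun i => fun θ => Real.sin θ * ((((i:ℕ):ℝ)+1) * a (i+1) θ)) ∈ S := by
          rw [← pb_fcos_FF]
          exact hS _ _ (hP1 fcos_mem_P1) hmem
        refine ih _ hbt hFS ⟨r1 - 1, by omega, by omega, ?_⟩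
        intro h0
        have hval := congrFun h0 θ₀
        simp only [Pi.zero_apply] at hval
        rw [hidx] at hval
        rcases mul_eq_zero.mp hval with h3 | h3
        · exact hsin h3
        · rcases mul_eq_zero.mp h3 with h4 | h4
          · exact hcoef h4
          · exact hθ₀ h4
    · push_neg at hhigh
      have hr0eq : r0 = 2 := by
        by_contra h
        exact hr0ne (hhigh r0 (by omega) hr0n)
      have hEq : Phi 2 (a 2) = FF (n+1) a - Phi 1 (a 1) - Phi 0 (a 0) := by
        funext p
        simp only [Pi.sub_apply, Phi, FF]
        rw [← Finset.sum_subset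
          (Finset.range_subset_range.mpr (by omega) : Finset.range 3 ⊆ Finset.range (n+1+1)) ?_]
        · rw [Finset.sum_range_succ, Finset.sum_range_succ, Finset.sum_range_one]
          ring
        · intro i hi hni
          simp only [Finset.mem_range] at hi hni
          rw [hhigh i (by omega) (by omega)]
          simp
      refine ⟨a 2, ha 2, hr0eq ▸ hr0ne, ?_⟩
      rw [hEq]
      exact S.sub_mem (S.sub_mem hmem (hP1 (Phi_mem_P1 le_rfl (ha 1))))
        (hP1 (Phi_mem_P1 (by omega) (ha 0)))

/-- `P¹` is a proper maximal Lie subalgebra of `P` under the Poisson bracket. -/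
theorem stmt7 :
    P1 ≤ P ∧ IsLieSub P1 ∧ P1 ≠ P ∧
      ∀ S : Submodule ℝ (ℝ × ℝ → ℝ), IsLieSub S → S ≤ P → P1 < S → S = P := by
  refine ⟨Submodule.span_mono ?_, isLieSub_P1, P1_ne_P, ?_⟩
  · rintro x ⟨r, m, _, hx⟩
    exact ⟨r, m, hx⟩
  · intro S hS hSP hlt
    have hP1S : P1 ≤ S := le_of_lt hlt
    obtain ⟨h, hhS, hhP1⟩ := SetLike.exists_of_lt hlt
    obtain ⟨n, a, ha, hrep⟩ := P_rep (hSP hhS)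
    subst hrep
    have hwit : ∃ r, 2 ≤ r ∧ r ≤ n ∧ a r ≠ 0 := by
      by_contra hcon
      push_neg at hcon
      apply hhP1
      cases n with
      | zero =>
        have hEq : FF 0 a = Phi 0 (a 0) := by
          funext p
          simp [FF, Phi]
        rw [hEq]
        exact Phi_mem_P1 (by omega) (ha 0)
      | succ k =>
        have hEq : FF (k+1) a = fun p => p.2 * (a 1) p.1 + (a 0) p.1 := by
          funext p
          show (∑ r ∈ Finset.range (k+1+1), p.2^r * a r p.1) = _
          rw [← Finset.sum_subset
            (Finset.range_subset_range.mpr (by omega) : Finset.range 2 ⊆ Finset.range (k+1+1)) ?_]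
          · rw [Finset.sum_range_succ, Finset.sum_range_one]
            ring
          · intro i hi hni
            simp only [Finset.mem_range] at hi hni
            rw [hcon i (by omega) (by omega)]
            simp
        rw [hEq]
        exact affine_mem_P1 (ha 1) (ha 0)
    obtain ⟨b, hbT, hbne, hbS⟩ := reduce hS hP1S n a ha hhS hwit
    have h2 := B_all hS hP1S hbT hbne hbS
    have hup := up hS hP1S h2
    have hPS : P ≤ S := by
      apply Submodule.span_le.mpr
      rintro x ⟨r, m, hx | hx⟩ <;> subst hx
      · by_cases hr : r ≤ 1
        · exact hP1S (Submodule.subset_span ⟨r, m, hr, Or.inl rfl⟩)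
        · exact hup r (by omega) _ (trig_sin m)
      · by_cases hr : r ≤ 1
        · exact hP1S (Submodule.subset_span ⟨r, m, hr, Or.inr rfl⟩)
        · exact hup r (by omega) _ (trig_cos m)
    exact le_antisymm hSP hPS
end
end

section
/- Let α ∈ ℝ, and let r ≥ 1 and N be integers of opposite parity (r + N odd). Then W_α contains an element of the form e^r_N + rα·e^{r−1}_N + q, where q ∈ P_ℂ has degree at most r − 2 in ℓ (q = 0 when r = 1). -/
noncomputable section
/-- Partial θ-derivative of a complex-valued function. -/
def pdThetaC (f : ℝ × ℝ → ℂ) : ℝ × ℝ → ℂ := fun p => deriv (fun t => f (t, p.2)) p.1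
/-- Partial ℓ-derivative of a complex-valued function. -/
def pdEllC (f : ℝ × ℝ → ℂ) : ℝ × ℝ → ℂ := fun p => deriv (fun l => f (p.1, l)) p.2
/-- Poisson bracket of complex-valued functions. -/
def pbC (f g : ℝ × ℝ → ℂ) : ℝ × ℝ → ℂ :=
  fun p => pdEllC f p * pdThetaC g p - pdThetaC f p * pdEllC g p

/-- `e^r_m = ℓ^r e^{imθ}`. -/
def eC (r : ℕ) (m : ℤ) : ℝ × ℝ → ℂ :=
  fun p => (p.2 : ℂ) ^ r * Complex.exp (Complex.I * (m : ℂ) * (p.1 : ℂ))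

/-- The complexification `P_ℂ` of `P`. -/
def PC : Submodule ℂ (ℝ × ℝ → ℂ) :=
  Submodule.span ℂ {h | ∃ (r : ℕ) (m : ℤ), h = eC r m}

/-- Closure under the Poisson bracket (complex case). -/
def IsLieSubC (S : Submodule ℂ (ℝ × ℝ → ℂ)) : Prop :=
  ∀ f g : ℝ × ℝ → ℂ, f ∈ S → g ∈ S → pbC f g ∈ S

/-- The generators of `W_α`: `1, e^0_1, e^0_{−1}, e^1_0` and
`e^2_{2N+1} + 2α e^1_{2N+1}` for all `N ∈ ℤ`. -/
def WGens (α : ℝ) : Set (ℝ × ℝ → ℂ) :=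
  {fun _ => 1, eC 0 1, eC 0 (-1), eC 1 0} ∪
    {h | ∃ N : ℤ, h = eC 2 (2 * N + 1) + (2 * α : ℂ) • eC 1 (2 * N + 1)}

/-- `W_α`: the smallest complex Lie subalgebra of `P_ℂ` containing the generators. -/
def W (α : ℝ) : Submodule ℂ (ℝ × ℝ → ℂ) :=
  sInf {S | S ≤ PC ∧ WGens α ⊆ S ∧ IsLieSubC S}

/-- The complexification of a real-valued function. -/
def cplx (f : ℝ × ℝ → ℝ) : ℝ × ℝ → ℂ := fun p => (f p : ℂ)

/-- `V_α`: the real elements of `W_α`, a real Lie subalgebra of `P`. -/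
def V (α : ℝ) : Submodule ℝ (ℝ × ℝ → ℝ) where
  carrier := {f | cplx f ∈ W α}
  add_mem' := by
    intro a b ha hb
    simp only [Set.mem_setOf_eq] at *
    have h : cplx (a + b) = cplx a + cplx b := by
      funext p; simp [cplx]
    rw [h]; exact add_mem ha hb
  zero_mem' := by
    simp only [Set.mem_setOf_eq]
    have h : cplx (0 : ℝ × ℝ → ℝ) = 0 := by funext p; simp [cplx]
    rw [h]; exact zero_mem _
  smul_mem' := by
    intro c a ha
    simp only [Set.mem_setOf_eq] at *
    have h : cplx (c • a) = (c : ℂ) • cplx a := by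
      funext p; simp [cplx]
    rw [h]; exact Submodule.smul_mem _ _ ha
end
noncomputable section
/-- The part of `P_ℂ` of degree at most `d` in `ℓ`. -/
def PCdeg (d : ℕ) : Submodule ℂ (ℝ × ℝ → ℂ) :=
  Submodule.span ℂ {h | ∃ (r : ℕ) (m : ℤ), r ≤ d ∧ h = eC r m}

namespace Stmt9Aux
open Finsupp

abbrev Fm := AddMonoidAlgebra ℂ (ℕ × ℤ)

lemma eC_mul (r s : ℕ) (m n : ℤ) (p : ℝ × ℝ) :
    eC r m p * eC s n p = eC (r + s) (m + n) p := by
  simp only [eC]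
  push_cast
  rw [pow_add, show Complex.I * ((m : ℂ) + n) * p.1 =
      Complex.I * m * p.1 + Complex.I * n * p.1 by ring, Complex.exp_add]
  ring

/-- evaluation monoid hom -/
def eCHom (p : ℝ × ℝ) : Multiplicative (ℕ × ℤ) →* ℂ where
  toFun x := eC (Multiplicative.toAdd x).1 (Multiplicative.toAdd x).2 p
  map_one' := by simp [eC]
  map_mul' x y := (eC_mul _ _ _ _ p).symm

/-- evaluation algebra hom -/
def Phi (p : ℝ × ℝ) : Fm →ₐ[ℂ] ℂ := AddMonoidAlgebra.lift ℂ ℂ (ℕ × ℤ) (eCHom p)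

def ev (c : Fm) : ℝ × ℝ → ℂ := fun p => Phi p c

lemma ev_single (x : ℕ × ℤ) (a : ℂ) :
    ev (AddMonoidAlgebra.single x a) = fun p => a * eC x.1 x.2 p := by
  funext p
  simp [ev, Phi, AddMonoidAlgebra.lift_single, eCHom, smul_eq_mul]

lemma ev_add (c d : Fm) : ev (c + d) = ev c + ev d := by
  funext p; simp [ev, map_add]

lemma ev_smul (a : ℂ) (c : Fm) : ev (a • c) = a • ev c := by
  funext p; simp [ev, map_smul, smul_eq_mul]

lemma ev_zero : ev (0 : Fm) = 0 := by funext p; simp [ev]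

lemma hasDerivAt_eC_theta (r : ℕ) (m : ℤ) (l t : ℝ) :
    HasDerivAt (fun t : ℝ => eC r m (t, l)) (Complex.I * m * eC r m (t, l)) t := by
  have h2 := ((((hasDerivAt_id ((t : ℝ) : ℂ)).const_mul (Complex.I * m)).cexp).const_mul
    (((l : ℝ) : ℂ) ^ r)).comp_ofReal
  simp only [id_eq, mul_one] at h2
  have hfun : (fun t : ℝ => eC r m (t, l))
      = fun y : ℝ => ((l : ℝ) : ℂ) ^ r * Complex.exp (Complex.I * m * (y : ℂ)) := by
    funext y; simp [eC]
  rw [hfun, show Complex.I * m * eC r m (t, l)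
      = ((l : ℝ) : ℂ) ^ r * (Complex.exp (Complex.I * m * (t : ℂ)) * (Complex.I * m)) by
        simp [eC]; ring]
  exact h2

lemma hasDerivAt_eC_ell (r : ℕ) (m : ℤ) (t l : ℝ) :
    HasDerivAt (fun l : ℝ => eC r m (t, l)) ((r : ℂ) * eC (r - 1) m (t, l)) l := by
  have h := ((hasDerivAt_pow r ((l : ℝ) : ℂ)).mul_const
    (Complex.exp (Complex.I * m * (t : ℂ)))).comp_ofReal
  have hfun : (fun l : ℝ => eC r m (t, l))
      = fun y : ℝ => ((y : ℝ) : ℂ) ^ r * Complex.exp (Complex.I * m * (t : ℂ)) := by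
    funext y; simp [eC]
  rw [hfun, show (r : ℂ) * eC (r - 1) m (t, l)
      = (r : ℂ) * ((l : ℝ) : ℂ) ^ (r - 1) * Complex.exp (Complex.I * m * (t : ℂ)) by
        simp [eC]; ring]
  exact h

def Dth (c : Fm) : Fm := c.coeff.sum fun x a => AddMonoidAlgebra.single x (Complex.I * x.2 * a)
def Dl (c : Fm) : Fm := c.coeff.sum fun x a => AddMonoidAlgebra.single (x.1 - 1, x.2) ((x.1 : ℂ) * a)

lemma Dth_single (x : ℕ × ℤ) (a : ℂ) :
    Dth (AddMonoidAlgebra.single x a) = AddMonoidAlgebra.single x (Complex.I * x.2 * a) :=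
  Finsupp.sum_single_index (by simp)

lemma Dl_single (x : ℕ × ℤ) (a : ℂ) :
    Dl (AddMonoidAlgebra.single x a) = AddMonoidAlgebra.single (x.1 - 1, x.2) ((x.1 : ℂ) * a) :=
  Finsupp.sum_single_index (by simp)

lemma Dth_add (c d : Fm) : Dth (c + d) = Dth c + Dth d :=
  Finsupp.sum_add_index' (fun a => by simp) (fun a b₁ b₂ => by rw [mul_add, AddMonoidAlgebra.single_add])

lemma Dl_add (c d : Fm) : Dl (c + d) = Dl c + Dl d :=
  Finsupp.sum_add_index' (fun a => by simp) (fun a b₁ b₂ => by rw [mul_add, AddMonoidAlgebra.single_add])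

lemma ev_eq_sum (c : Fm) (p : ℝ × ℝ) :
    ev c p = ∑ x ∈ c.coeff.support, c.coeff x * eC x.1 x.2 p := by
  simp only [ev, Phi, AddMonoidAlgebra.lift_apply]
  rw [Finsupp.sum]
  refine Finset.sum_congr rfl fun x hx => ?_
  simp [eCHom, smul_eq_mul]

lemma ev_Dth_apply (c : Fm) (p : ℝ × ℝ) :
    ev (Dth c) p = ∑ x ∈ c.coeff.support, Complex.I * x.2 * c.coeff x * eC x.1 x.2 p := by
  simp only [ev, Dth]
  rw [map_finsuppSum, Finsupp.sum]
  refine Finset.sum_congr rfl fun x hx => ?_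
  simp only [Phi, AddMonoidAlgebra.lift_single, smul_eq_mul, eCHom, MonoidHom.coe_mk,
    OneHom.coe_mk, toAdd_ofAdd]

lemma ev_Dl_apply (c : Fm) (p : ℝ × ℝ) :
    ev (Dl c) p = ∑ x ∈ c.coeff.support, (x.1 : ℂ) * c.coeff x * eC (x.1 - 1) x.2 p := by
  simp only [ev, Dl]
  rw [map_finsuppSum, Finsupp.sum]
  refine Finset.sum_congr rfl fun x hx => ?_
  simp only [Phi, AddMonoidAlgebra.lift_single, smul_eq_mul, eCHom, MonoidHom.coe_mk,
    OneHom.coe_mk, toAdd_ofAdd]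

lemma hasDerivAt_ev_theta (c : Fm) (l t : ℝ) :
    HasDerivAt (fun t : ℝ => ev c (t, l)) (ev (Dth c) (t, l)) t := by
  rw [show (fun t : ℝ => ev c (t, l)) = fun t : ℝ => ∑ x ∈ c.coeff.support, c.coeff x * eC x.1 x.2 (t, l)
      from funext fun t => ev_eq_sum c (t, l), ev_Dth_apply]
  refine HasDerivAt.fun_sum fun x hx => ?_
  have h := (hasDerivAt_eC_theta x.1 x.2 l t).const_mul (c.coeff x)
  rw [show Complex.I * x.2 * c.coeff x * eC x.1 x.2 (t, l)
      = c.coeff x * (Complex.I * x.2 * eC x.1 x.2 (t, l)) by ring]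
  exact h

lemma hasDerivAt_ev_ell (c : Fm) (t l : ℝ) :
    HasDerivAt (fun l : ℝ => ev c (t, l)) (ev (Dl c) (t, l)) l := by
  rw [show (fun l : ℝ => ev c (t, l)) = fun l : ℝ => ∑ x ∈ c.coeff.support, c.coeff x * eC x.1 x.2 (t, l)
      from funext fun l => ev_eq_sum c (t, l), ev_Dl_apply]
  refine HasDerivAt.fun_sum fun x hx => ?_
  have h := (hasDerivAt_eC_ell x.1 x.2 t l).const_mul (c.coeff x)
  rw [show (x.1 : ℂ) * c.coeff x * eC (x.1 - 1) x.2 (t, l)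
      = c.coeff x * ((x.1 : ℂ) * eC (x.1 - 1) x.2 (t, l)) by ring]
  exact h

lemma pdThetaC_ev (c : Fm) : pdThetaC (ev c) = ev (Dth c) := by
  funext p
  exact (hasDerivAt_ev_theta c p.2 p.1).deriv

lemma pdEllC_ev (c : Fm) : pdEllC (ev c) = ev (Dl c) := by
  funext p
  exact (hasDerivAt_ev_ell c p.1 p.2).deriv

def brc (c d : Fm) : Fm := Dl c * Dth d - Dth c * Dl d

lemma pbC_ev (c d : Fm) : pbC (ev c) (ev d) = ev (brc c d) := by
  funext p
  simp only [pbC, pdThetaC_ev, pdEllC_ev, brc, ev, map_sub, map_mul]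

lemma mem_W_of_gen {α : ℝ} {h : ℝ × ℝ → ℂ} (hh : h ∈ WGens α) : h ∈ W α :=
  Submodule.mem_sInf.2 fun _ hS => hS.2.1 hh

lemma pb_mem_W {α : ℝ} {f g : ℝ × ℝ → ℂ} (hf : f ∈ W α) (hg : g ∈ W α) :
    pbC f g ∈ W α :=
  Submodule.mem_sInf.2 fun S hS =>
    hS.2.2 f g (Submodule.mem_sInf.1 hf S hS) (Submodule.mem_sInf.1 hg S hS)

lemma ev_mem_PCdeg {d : ℕ} {c : Fm} (h : ∀ x ∈ c.coeff.support, x.1 ≤ d) : ev c ∈ PCdeg d := by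
  have he : ev c = ∑ x ∈ c.coeff.support, (c.coeff x) • eC x.1 x.2 := by
    funext p
    rw [ev_eq_sum]
    simp
  rw [he]
  exact Submodule.sum_mem _ fun x hx =>
    Submodule.smul_mem _ _ (Submodule.subset_span ⟨x.1, x.2, h x hx, rfl⟩)

lemma support_Dth (c : Fm) : (Dth c).coeff.support ⊆ c.coeff.support := by
  intro x hx
  rw [Dth, AddMonoidAlgebra.coeff_finsuppSum] at hx
  obtain ⟨y, hy, hxy⟩ := Finset.mem_biUnion.1 (Finsupp.support_sum hx)
  have := Finsupp.support_single_subset hxy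
  simp only [Finset.mem_singleton] at this
  rwa [this]

lemma support_Dl (c : Fm) :
    ∀ x ∈ (Dl c).coeff.support, ∃ y ∈ c.coeff.support, y.1 = x.1 + 1 ∧ y.2 = x.2 := by
  intro x hx
  rw [Dl, AddMonoidAlgebra.coeff_finsuppSum] at hx
  obtain ⟨y, hy, hxy⟩ := Finset.mem_biUnion.1 (Finsupp.support_sum hx)
  have hne : ((y.1 : ℂ) * c.coeff y) ≠ 0 := by
    intro h0
    rw [h0, AddMonoidAlgebra.single_zero] at hxy
    simp at hxy
  have hy1 : y.1 ≠ 0 := by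
    intro h0
    exact hne (by rw [h0]; simp)
  have hx' := Finsupp.support_single_subset hxy
  simp only [Finset.mem_singleton] at hx'
  subst hx'
  exact ⟨y, hy, by omega, rfl⟩

abbrev sg (x : ℕ × ℤ) (a : ℂ) : Fm := AddMonoidAlgebra.single x a

lemma single_shiftU2 (r : ℕ) (hr : 1 ≤ r) (n : ℤ) (w z : ℂ) :
    (AddMonoidAlgebra.single (2 + (r - 1 - 1), n) (w * (((r - 1 : ℕ) : ℂ) * z)) : Fm)
      = AddMonoidAlgebra.single (r, n) (w * (((r - 1 : ℕ) : ℂ) * z)) := by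
  rcases r with _ | _ | s
  · omega
  · simp
  · have h : 2 + (s + 2 - 1 - 1) = s + 2 := by omega
    rw [h]

lemma brc_FG (α : ℝ) (r : ℕ) (hr : 1 ≤ r) (N m : ℤ) (c : Fm) :
    brc (sg (2, m) 1 + sg (1, m) (2 * (α : ℂ)))
        (sg (r, N) 1 + sg (r - 1, N) ((r : ℂ) * (α : ℂ)) + c)
      = sg (r + 1, m + N) (Complex.I * (2 * N - m * r))
        + sg (r, m + N) (Complex.I * (2 * N - m * r) * ((r + 1 : ℕ) : ℂ) * (α : ℂ))
        + (sg (0, m) (2 * (α : ℂ)) * sg (r - 1, N) (Complex.I * N * ((r : ℂ) * (α : ℂ)))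
          + sg (1, m) (2 : ℂ) * Dth c
          + sg (0, m) (2 * (α : ℂ)) * Dth c
          - sg (1, m) (Complex.I * m * (2 * (α : ℂ)))
              * sg (r - 1 - 1, N) (((r - 1 : ℕ) : ℂ) * ((r : ℂ) * (α : ℂ)))
          - sg (2, m) (Complex.I * m) * Dl c
          - sg (1, m) (Complex.I * m * (2 * (α : ℂ))) * Dl c) := by
  have hDlF : Dl (sg (2, m) 1 + sg (1, m) (2 * (α : ℂ)))
      = sg (1, m) (2 : ℂ) + sg (0, m) (2 * (α : ℂ)) := by
    rw [Dl_add, Dl_single, Dl_single]; norm_num [sg]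
  have hDthF : Dth (sg (2, m) 1 + sg (1, m) (2 * (α : ℂ)))
      = sg (2, m) (Complex.I * m) + sg (1, m) (Complex.I * m * (2 * (α : ℂ))) := by
    rw [Dth_add, Dth_single, Dth_single]; norm_num [sg]
  have hDthG : Dth (sg (r, N) 1 + sg (r - 1, N) ((r : ℂ) * (α : ℂ)) + c)
      = sg (r, N) (Complex.I * N)
        + sg (r - 1, N) (Complex.I * N * ((r : ℂ) * (α : ℂ))) + Dth c := by
    rw [Dth_add, Dth_add, Dth_single, Dth_single]; norm_num [sg]
  have hDlG : Dl (sg (r, N) 1 + sg (r - 1, N) ((r : ℂ) * (α : ℂ)) + c)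
      = sg (r - 1, N) ((r : ℂ))
        + sg (r - 1 - 1, N) (((r - 1 : ℕ) : ℂ) * ((r : ℂ) * (α : ℂ))) + Dl c := by
    rw [Dl_add, Dl_add, Dl_single, Dl_single]; norm_num [sg]
  have top1 : (AddMonoidAlgebra.single (r + 1, m + N) (Complex.I * (2 * N - m * r)) : Fm)
      = AddMonoidAlgebra.single (r + 1, m + N) ((2 : ℂ) * (Complex.I * N))
        - AddMonoidAlgebra.single (r + 1, m + N) ((Complex.I * m) * (r : ℂ)) := by
    rw [← AddMonoidAlgebra.single_sub]
    exact congrArg _ (by ring)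
  have top2 : (AddMonoidAlgebra.single (r, m + N)
        (Complex.I * (2 * N - m * r) * ((r + 1 : ℕ) : ℂ) * (α : ℂ)) : Fm)
      = AddMonoidAlgebra.single (r, m + N) ((2 : ℂ) * (Complex.I * N * ((r : ℂ) * (α : ℂ))))
        + AddMonoidAlgebra.single (r, m + N) ((2 * (α : ℂ)) * (Complex.I * N))
        - AddMonoidAlgebra.single (r, m + N) ((Complex.I * m) * (((r - 1 : ℕ) : ℂ) * ((r : ℂ) * (α : ℂ))))
        - AddMonoidAlgebra.single (r, m + N) ((Complex.I * m * (2 * (α : ℂ))) * (r : ℂ)) := by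
    rw [← AddMonoidAlgebra.single_add, ← AddMonoidAlgebra.single_sub, ← AddMonoidAlgebra.single_sub]
    refine congrArg _ ?_
    rw [Nat.cast_sub hr]
    push_cast
    ring
  unfold brc
  rw [hDlF, hDthF, hDthG, hDlG]
  simp only [mul_add, add_mul, AddMonoidAlgebra.single_mul_single, Prod.mk_add_mk]
  simp only [sg]
  simp only [show (1 : ℕ) + r = r + 1 from by omega, show 2 + (r - 1) = r + 1 from by omega,
    show 1 + (r - 1) = r from by omega, zero_add]
  rw [single_shiftU2 r hr (m + N) (Complex.I * m) ((r : ℂ) * (α : ℂ))]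
  rw [top1, top2]
  ring

lemma single_shiftU5 (r : ℕ) (n : ℤ) (w z : ℂ) :
    (AddMonoidAlgebra.single (1 + (r - 1 - 1), n) (w * (((r - 1 : ℕ) : ℂ) * z)) : Fm)
      = AddMonoidAlgebra.single (r - 1, n) (w * (((r - 1 : ℕ) : ℂ) * z)) := by
  rcases r with _ | _ | s
  · simp
  · simp
  · have h : 1 + (s + 2 - 1 - 1) = s + 2 - 1 := by omega
    rw [h]

lemma evF_mem (α : ℝ) (M : ℤ) :
    ev (sg (2, 2 * M + 1) 1 + sg (1, 2 * M + 1) (2 * (α : ℂ))) ∈ W α := by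
  have he : ev (sg (2, 2 * M + 1) 1 + sg (1, 2 * M + 1) (2 * (α : ℂ)))
      = eC 2 (2 * M + 1) + (2 * (α : ℂ)) • eC 1 (2 * M + 1) := by
    rw [ev_add, ev_single, ev_single]
    funext p
    simp [smul_eq_mul]
  rw [he]
  exact mem_W_of_gen (Set.mem_union_right _ ⟨M, rfl⟩)

lemma key (α : ℝ) (r : ℕ) (hr : 1 ≤ r) :
    ∀ N : ℤ, Odd ((r : ℤ) + N) →
      ∃ c : Fm, (∀ x ∈ c.coeff.support, x.1 + 2 ≤ r) ∧
        ev (sg (r, N) 1 + sg (r - 1, N) ((r : ℂ) * (α : ℂ)) + c)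
          ∈ W α := by
  induction r, hr using Nat.le_induction with
  | base =>
    intro N hodd
    obtain ⟨k, hk⟩ := hodd
    have hN : N = 2 * k := by omega
    subst hN
    refine ⟨0, by simp, ?_⟩
    have hFW := evF_mem α k
    have hG0W : ev (sg (0, -1) (1 : ℂ)) ∈ W α := by
      have he : ev (sg (0, -1) (1 : ℂ)) = eC 0 (-1) := by
        rw [ev_single]; funext p; simp
      rw [he]
      exact mem_W_of_gen (Set.mem_union_left _ (by simp))
    have hbrW : ev (brc (sg (2, 2 * k + 1) 1 + sg (1, 2 * k + 1) (2 * (α : ℂ)))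
        (sg (0, -1) (1 : ℂ))) ∈ W α := by
      rw [← pbC_ev]; exact pb_mem_W hFW hG0W
    have hDlG0 : Dl (sg (0, -1) (1 : ℂ)) = 0 := by
      rw [Dl_single]; simp
    have hDthG0 : Dth (sg (0, -1) (1 : ℂ)) = sg (0, -1) (-Complex.I) := by
      rw [Dth_single]; norm_num
    have hDlF : Dl (sg (2, 2 * k + 1) 1 + sg (1, 2 * k + 1) (2 * (α : ℂ)))
        = sg (1, 2 * k + 1) (2 : ℂ) + sg (0, 2 * k + 1) (2 * (α : ℂ)) := by
      rw [Dl_add, Dl_single, Dl_single]; norm_num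
    have hb : brc (sg (2, 2 * k + 1) 1 + sg (1, 2 * k + 1) (2 * (α : ℂ))) (sg (0, -1) (1 : ℂ))
        = sg (1, 2 * k) ((2 : ℂ) * -Complex.I) + sg (0, 2 * k) ((2 * (α : ℂ)) * -Complex.I) := by
      unfold brc
      rw [hDlG0, mul_zero, sub_zero, hDlF, hDthG0, add_mul,
        AddMonoidAlgebra.single_mul_single, AddMonoidAlgebra.single_mul_single]
      simp only [Prod.mk_add_mk]
      norm_num
    have hid : sg ((1 : ℕ), 2 * k) (1 : ℂ)
          + sg (1 - 1, 2 * k) (((1 : ℕ) : ℂ) * (α : ℂ)) + 0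
        = (Complex.I / 2) • brc (sg (2, 2 * k + 1) 1 + sg (1, 2 * k + 1) (2 * (α : ℂ)))
            (sg (0, -1) (1 : ℂ)) := by
      rw [hb, smul_add, AddMonoidAlgebra.smul_single', AddMonoidAlgebra.smul_single', add_zero]
      congr 1
      · congr 1
        rw [show Complex.I / 2 * ((2 : ℂ) * -Complex.I) = -(Complex.I * Complex.I) by ring,
          Complex.I_mul_I]
        norm_num
      · congr 1
        rw [show Complex.I / 2 * (2 * (α : ℂ) * -Complex.I) = -(Complex.I * Complex.I) * α by
          ring, Complex.I_mul_I]
        norm_num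
    rw [hid, ev_smul]
    exact Submodule.smul_mem _ _ hbrW
  | succ r hr ih =>
    intro N' hodd
    obtain ⟨k, hk⟩ := hodd
    obtain ⟨NN, M, hsum, hne, hpar⟩ :
        ∃ (NN M : ℤ), N' = (2 * M + 1) + NN ∧ (2 * NN - (2 * M + 1) * (r : ℤ)) ≠ 0
          ∧ Odd ((r : ℤ) + NN) := by
      rcases eq_or_ne (2 * N' + (r : ℤ) + 2) 0 with h0 | h0
      · exact ⟨N' - 1, 0, by ring, by omega, ⟨k - 1, by omega⟩⟩
      · exact ⟨N' + 1, -1, by ring, by omega, ⟨k, by omega⟩⟩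
    subst hsum
    obtain ⟨c, hc, hcW⟩ := ih NN hpar
    have hFW : ev (sg (2, 2 * M + 1) 1 + sg (1, 2 * M + 1) (2 * (α : ℂ))) ∈ W α :=
      evF_mem α M
    have hbrW : ev (brc (sg (2, 2 * M + 1) 1 + sg (1, 2 * M + 1) (2 * (α : ℂ)))
        (sg (r, NN) 1 + sg (r - 1, NN) ((r : ℂ) * (α : ℂ)) + c)) ∈ W α := by
      rw [← pbC_ev]; exact pb_mem_W hFW hcW
    have hbig := brc_FG α r hr NN (2 * M + 1) c
    set kC : ℂ := Complex.I * (2 * (NN : ℂ) - ((2 * M + 1 : ℤ) : ℂ) * (r : ℂ)) with hkC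
    have hkne : kC ≠ 0 := by
      rw [hkC]
      apply mul_ne_zero Complex.I_ne_zero
      rw [show (2 * (NN : ℂ) - ((2 * M + 1 : ℤ) : ℂ) * (r : ℂ))
          = ((2 * NN - (2 * M + 1) * (r : ℤ) : ℤ) : ℂ) by push_cast; ring]
      exact_mod_cast hne
    set R : Fm := sg (0, 2 * M + 1) (2 * (α : ℂ))
          * sg (r - 1, NN) (Complex.I * NN * ((r : ℂ) * (α : ℂ)))
        + sg (1, 2 * M + 1) (2 : ℂ) * Dth c
        + sg (0, 2 * M + 1) (2 * (α : ℂ)) * Dth c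
        - sg (1, 2 * M + 1) (Complex.I * (2 * M + 1 : ℤ) * (2 * (α : ℂ)))
            * sg (r - 1 - 1, NN) (((r - 1 : ℕ) : ℂ) * ((r : ℂ) * (α : ℂ)))
        - sg (2, 2 * M + 1) (Complex.I * (2 * M + 1 : ℤ)) * Dl c
        - sg (1, 2 * M + 1) (Complex.I * (2 * M + 1 : ℤ) * (2 * (α : ℂ))) * Dl c with hR
    refine ⟨kC⁻¹ • R, ?_, ?_⟩
    · intro x hx
      have hx0 : x ∈ R.coeff.support :=
        Finsupp.support_smul (b := kC⁻¹) (by rwa [AddMonoidAlgebra.coeff_smul] at hx)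
      rw [hR] at hx0
      simp only [AddMonoidAlgebra.coeff_sub, AddMonoidAlgebra.coeff_add] at hx0
      rcases Finset.mem_union.1 (Finsupp.support_sub hx0) with h | h
      · rcases Finset.mem_union.1 (Finsupp.support_sub h) with h | h
        · rcases Finset.mem_union.1 (Finsupp.support_sub h) with h | h
          · rcases Finset.mem_union.1 (Finsupp.support_add h) with h | h
            · rcases Finset.mem_union.1 (Finsupp.support_add h) with h | h
              · -- P1
                obtain ⟨y, hy, z, hz, hyz⟩ :=
                  Finset.mem_add.1 (AddMonoidAlgebra.support_coeff_mul_subset _ _ h)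
                have hy' := Finset.mem_singleton.1 (Finsupp.support_single_subset hy)
                have hz' := Finset.mem_singleton.1 (Finsupp.support_single_subset hz)
                subst hy' hz'
                rw [← hyz]
                simp only [Prod.fst_add]
                omega
              · -- P2
                obtain ⟨y, hy, z, hz, hyz⟩ :=
                  Finset.mem_add.1 (AddMonoidAlgebra.support_coeff_mul_subset _ _ h)
                have hy' := Finset.mem_singleton.1 (Finsupp.support_single_subset hy)
                have hz' := hc z (support_Dth c hz)
                subst hy'
                rw [← hyz]
                simp only [Prod.fst_add]
                omega
            · -- P3
              obtain ⟨y, hy, z, hz, hyz⟩ :=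
                Finset.mem_add.1 (AddMonoidAlgebra.support_coeff_mul_subset _ _ h)
              have hy' := Finset.mem_singleton.1 (Finsupp.support_single_subset hy)
              have hz' := hc z (support_Dth c hz)
              subst hy'
              rw [← hyz]
              simp only [Prod.fst_add]
              omega
          · -- P4 = U5
            rw [show sg (1, 2 * M + 1) (Complex.I * (2 * M + 1 : ℤ) * (2 * (α : ℂ)))
                  * sg (r - 1 - 1, NN) (((r - 1 : ℕ) : ℂ) * ((r : ℂ) * (α : ℂ)))
                = (AddMonoidAlgebra.single ((r - 1 : ℕ), (2 * M + 1) + NN) : ℂ → Fm)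
                    ((Complex.I * (2 * M + 1 : ℤ) * (2 * (α : ℂ)))
                      * (((r - 1 : ℕ) : ℂ) * ((r : ℂ) * (α : ℂ)))) from by
                simp only [sg, AddMonoidAlgebra.single_mul_single, Prod.mk_add_mk]
                exact single_shiftU5 r ((2 * M + 1) + NN) _ _] at h
            have hx' := Finset.mem_singleton.1 (Finsupp.support_single_subset h)
            subst hx'
            omega
        · -- P5
          obtain ⟨y, hy, z, hz, hyz⟩ :=
            Finset.mem_add.1 (AddMonoidAlgebra.support_coeff_mul_subset _ _ h)
          have hy' := Finset.mem_singleton.1 (Finsupp.support_single_subset hy)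
          obtain ⟨w, hw, hw1, hw2⟩ := support_Dl c z hz
          have := hc w hw
          subst hy'
          rw [← hyz]
          simp only [Prod.fst_add]
          omega
      · -- P6
        obtain ⟨y, hy, z, hz, hyz⟩ :=
          Finset.mem_add.1 (AddMonoidAlgebra.support_coeff_mul_subset _ _ h)
        have hy' := Finset.mem_singleton.1 (Finsupp.support_single_subset hy)
        obtain ⟨w, hw, hw1, hw2⟩ := support_Dl c z hz
        have := hc w hw
        subst hy'
        rw [← hyz]
        simp only [Prod.fst_add]
        omega
    · -- membership
      have hid : sg ((r + 1 : ℕ), (2 * M + 1) + NN) (1 : ℂ)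
            + sg (r + 1 - 1, (2 * M + 1) + NN) (((r + 1 : ℕ) : ℂ) * (α : ℂ))
            + kC⁻¹ • R
          = kC⁻¹ • brc (sg (2, 2 * M + 1) 1 + sg (1, 2 * M + 1) (2 * (α : ℂ)))
              (sg (r, NN) 1 + sg (r - 1, NN) ((r : ℂ) * (α : ℂ)) + c) := by
        rw [hbig]
        rw [smul_add, smul_add]
        simp only [Nat.add_sub_cancel]
        congr 1
        congr 1
        · simp only [sg]
          rw [AddMonoidAlgebra.smul_single', inv_mul_cancel₀ hkne]
        · simp only [sg]
          rw [AddMonoidAlgebra.smul_single']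
          congr 1
          rw [show kC⁻¹ * (kC * ((r + 1 : ℕ) : ℂ) * (α : ℂ))
              = (kC⁻¹ * kC) * (((r + 1 : ℕ) : ℂ) * (α : ℂ)) by ring,
            inv_mul_cancel₀ hkne, one_mul]
      rw [hid, ev_smul]
      exact Submodule.smul_mem _ _ hbrW

end Stmt9Aux

/-- For `r ≥ 1` and `N` of parity opposite to `r`, `W_α` contains an element
`e^r_N + rα e^{r−1}_N + q` with `q` of degree at most `r − 2` in `ℓ` (`q = 0` if `r = 1`). -/
theorem stmt9 (α : ℝ) (r : ℕ) (N : ℤ) (hr : 1 ≤ r) (hpar : Odd ((r : ℤ) + N)) :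
    ∃ q : ℝ × ℝ → ℂ, q ∈ PCdeg (r - 2) ∧ (r = 1 → q = 0) ∧
      eC r N + ((r : ℂ) * (α : ℂ)) • eC (r - 1) N + q ∈ W α := by
  obtain ⟨c, hc, hW⟩ := Stmt9Aux.key α r hr N hpar
  refine ⟨Stmt9Aux.ev c, Stmt9Aux.ev_mem_PCdeg (fun x hx => by have := hc x hx; omega), ?_, ?_⟩
  · intro h1
    have hs : c.coeff.support = ∅ := by
      rw [Finset.eq_empty_iff_forall_notMem]
      intro x hx
      have := hc x hx
      omega
    rw [AddMonoidAlgebra.coeff_eq_zero.1 (Finsupp.support_eq_empty.1 hs), Stmt9Aux.ev_zero]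
  · have he : eC r N + ((r : ℂ) * (α : ℂ)) • eC (r - 1) N + Stmt9Aux.ev c
        = Stmt9Aux.ev (Stmt9Aux.sg (r, N) 1 + Stmt9Aux.sg (r - 1, N) ((r : ℂ) * (α : ℂ)) + c) := by
      rw [Stmt9Aux.ev_add, Stmt9Aux.ev_add, Stmt9Aux.ev_single, Stmt9Aux.ev_single]
      funext p
      simp [smul_eq_mul]
    rw [he]
    exact hW
end
end
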